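/- arXiv:1806.04837 — 5 statements merged into one kernel-verified Lean document; each statement's English description precedes it below -/
import Mathlib

section
/- For every q ∈ ℂ with |q| < 1 and all w, w' ∈ Ĥ⁰, one has Z_q(w *_q w') = Z_q(w) · Z_q(w'). (In particular Ĥ⁰ is closed under the stuffle product *_q.) -/
noncomputable section

/-- The coefficient ring `𝒞 = ℚ[ℏ, ℏ⁻¹]`, realized as Laurent polynomials over `ℚ`. -/
abbrev CC : Type := LaurentPolynomial ℚ

/-- The variable `ℏ ∈ 𝒞`. -/
def hb : CC := LaurentPolynomial.T 1

/-- Embedding of rational constants into `𝒞`. -/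
def qs (x : ℚ) : CC := algebraMap ℚ CC x

/-- The non-commutative polynomial ring `H = 𝒞⟨a, b⟩`. -/
abbrev H : Type := FreeAlgebra CC (Fin 2)

/-- The generator `a`. -/
def av : H := FreeAlgebra.ι CC 0

/-- The generator `b`. -/
def bv : H := FreeAlgebra.ι CC 1

/-- `e k` for `k : ℕ`:  `e 0 = e_{1̄} = ab`, and `e (k+1) = e_{k+1} = a^k (a+ℏ) b`. -/
def ev : ℕ → H
  | 0 => av * bv
  | (k+1) => av ^ k * (av + algebraMap CC H hb) * bv

/-- The monomial `e_{k_1} ⋯ e_{k_r}` attached to an index (a list over `N̂`,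
with `0` encoding `1̄` and `k+1` encoding the positive integer `k+1`). -/
def eword (l : List ℕ) : H := (l.map ev).prod

/-- `Ĥ¹`, as the `𝒞`-span of all monomials `e_k` (this coincides with the subalgebra
freely generated by the `e_k`). -/
def H1 : Submodule CC H := Submodule.span CC {x : H | ∃ l : List ℕ, x = eword l}

/-- `Ĥ⁰`, the `𝒞`-span of monomials `e_k` with `k ∈ Î₀` (first entry `≠ 1`). -/
def H0 : Submodule CC H := Submodule.span CC
  {x : H | ∃ l : List ℕ, l.head? ≠ some 1 ∧ x = eword l}

/-- The circle product `∘_q` on the generators. -/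
def circ : ℕ → ℕ → H
  | 0, 0 => ev 2 - hb • ev 0
  | 0, (l+1) => ev (l+2)
  | (k+1), 0 => ev (k+2)
  | (k+1), (l+1) => ev (k+l+2) + hb • ev (k+l+1)

/-- The defining properties of the shuffle product `⧢_q` on `H`. -/
def IsShuffle (sh : H →ₗ[CC] H →ₗ[CC] H) : Prop :=
  (∀ w : H, sh 1 w = w) ∧ (∀ w : H, sh w 1 = w) ∧
  (∀ w w' : H, sh (av * w) (av * w') =
      av * (sh (av * w) w' + sh w (av * w') + hb • sh w w')) ∧
  (∀ w w' : H, sh (bv * w) w' = bv * sh w w') ∧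
  (∀ w w' : H, sh w (bv * w') = bv * sh w w')

/-- The defining properties of the stuffle product `*_q` on `Ĥ¹`. -/
def IsStuffle (st : H →ₗ[CC] H →ₗ[CC] H) : Prop :=
  (∀ w : H, st 1 w = w) ∧ (∀ w : H, st w 1 = w) ∧
  (∀ k l : ℕ, ∀ w w' : H, w ∈ H1 → w' ∈ H1 →
    st (ev k * w) (ev l * w') =
      ev k * st w (ev l * w') + ev l * st (ev k * w) w' + circ k l * st w w')

/-- The q-integer `[m] = (1-q^m)/(1-q)`. -/
def qint (q : ℂ) (m : ℕ) : ℂ := (1 - q ^ m) / (1 - q)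

/-- `F_k(m)`:  `F 0 = F_{1̄}` and `F (k+1) = F_{k+1}`. -/
def Fq (q : ℂ) : ℕ → ℕ → ℂ
  | 0, m => q ^ m / qint q m
  | (k+1), m => q ^ (k * m) / (qint q m) ^ (k + 1)

/-- `ζ_q(k)` for an index `k` (a list over `N̂`): the sum over `m_1 > ⋯ > m_r ≥ 1`. -/
def zetaq (q : ℂ) (l : List ℕ) : ℂ :=
  ∑' m : {f : Fin l.length → ℕ // StrictAnti f ∧ ∀ i, 0 < f i},
    ∏ i : Fin l.length, Fq q (l.get i) (m.1 i)

/-- The defining properties of the `𝒞`-linear map `Z_q` (as a map on all of `H`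
extending the one on `Ĥ⁰`): additive, `𝒞`-semilinear along `ρ`, sending `e_k ↦ ζ_q(k)`
for `k ∈ Î₀`. -/
def IsZq (ρ : CC →ₐ[ℚ] ℂ) (q : ℂ) (Z : H →+ ℂ) : Prop :=
  (∀ c : CC, ∀ w : H, Z (c • w) = ρ c * Z w) ∧
  (∀ l : List ℕ, l.head? ≠ some 1 → Z (eword l) = zetaq q l)


/-! The two sides are bi-additive and `𝒞`-semilinear in `(w, w')`, so it suffices to take
`w = e_u`, `w' = e_v` with `u, v ∈ Î₀`. Unfolding the stuffle recursion writes `e_u *_q e_v` as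
an explicit formal combination of monomials `e_k`, all with `k ∈ Î₀`. The truncated sums
`ζ_{<N}(k) = ∑_{N > m_1 > ⋯ > m_r ≥ 1} ∏ F_{k_j}(m_j)` multiply according to the same recursion:
splitting the product of the outermost sums over `m_1` and `n_1` into `m_1 > n_1`, `m_1 < n_1`
and `m_1 = n_1` gives the three terms, the diagonal one because `F_k(m) F_l(m)` is the
`∘_q`-combination of the `F_j(m)` once `ℏ = 1 - q`. Letting `N → ∞` gives the claim; the series
converge absolutely because `F_k(m) = O(|q|^m)` for `k ≠ 1` and `F_1(m) = 1/[m]` is bounded. -/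

open Finset Filter Topology

def circTerms : ℕ → ℕ → List (CC × ℕ)
  | 0, 0 => [(1, 2), (-hb, 0)]
  | 0, (l+1) => [(1, l+2)]
  | (k+1), 0 => [(1, k+2)]
  | (k+1), (l+1) => [(1, k+l+2), (hb, k+l+1)]

theorem circ_eq_sum_circTerms (k l : ℕ) :
    circ k l = ((circTerms k l).map fun ch => ch.1 • ev ch.2).sum := by
  rcases k with _ | k <;> rcases l with _ | l <;> simp [circ, circTerms, sub_eq_add_neg]
  exact (neg_smul hb (ev 0)).symm

theorem snd_ne_one_of_mem_circTerms {k l : ℕ} (hk : k ≠ 1) (hl : l ≠ 1) :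
    ∀ ch ∈ circTerms k l, ch.2 ≠ 1 := by
  rcases k with _ | k <;> rcases l with _ | l <;> simp_all [circTerms]

/-- A list `[(c₁, u₁), …, (cₙ, uₙ)]` stands for the formal combination `∑ cᵢ e_{uᵢ}`; unlike the
monomials `e_u` inside `H`, it can be evaluated on any function of the index. -/
abbrev Comb : Type := List (CC × List ℕ)

namespace Comb

def eval {R : Type*} [Semiring R] (φ : CC →+* R) (g : List ℕ → R) (p : Comb) : R :=
  (p.map fun cw => φ cw.1 * g cw.2).sum

def consMul (c : CC) (j : ℕ) (p : Comb) : Comb :=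
  p.map fun cw => (c * cw.1, j :: cw.2)

def Admissible (p : Comb) : Prop := ∀ cw ∈ p, cw.2.head? ≠ some 1

variable {R : Type*} [Semiring R] (φ : CC →+* R) (g : List ℕ → R)

@[simp] theorem eval_nil : eval φ g [] = 0 := rfl

@[simp] theorem eval_cons (cw : CC × List ℕ) (p : Comb) :
    eval φ g (cw :: p) = φ cw.1 * g cw.2 + eval φ g p := by
  simp [eval]

@[simp] theorem eval_append (p p' : Comb) :
    eval φ g (p ++ p') = eval φ g p + eval φ g p' := by
  simp [eval]

theorem eval_flatMap {α : Type*} (L : List α) (f : α → Comb) :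
    eval φ g (L.flatMap f) = (L.map fun a => eval φ g (f a)).sum := by
  induction L with
  | nil => rfl
  | cons a L ih => simp [ih]

end Comb

open Comb

def formalStuffle : List ℕ → List ℕ → Comb
  | [], v => [(1, v)]
  | (k::u), [] => [(1, k::u)]
  | (k::u), (l::v) =>
      consMul 1 k (formalStuffle u (l::v)) ++ consMul 1 l (formalStuffle (k::u) v) ++
        (circTerms k l).flatMap fun ch => consMul ch.1 ch.2 (formalStuffle u v)

theorem formalStuffle_admissible {u v : List ℕ} (hu : u.head? ≠ some 1)
    (hv : v.head? ≠ some 1) : (formalStuffle u v).Admissible := by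
  intro cw hcw
  match u, v with
  | [], v => simp_all [formalStuffle]
  | (k::u), [] => simp_all [formalStuffle]
  | (k::u), (l::v) =>
    simp only [formalStuffle, consMul, List.mem_append, List.mem_map, List.mem_flatMap] at hcw
    rcases hcw with (⟨p, -, rfl⟩ | ⟨p, -, rfl⟩) | ⟨ch, hch, p, -, rfl⟩
    · simpa using hu
    · simpa using hv
    · simpa using snd_ne_one_of_mem_circTerms (by simpa using hu) (by simpa using hv) ch hch

theorem eword_cons (k : ℕ) (u : List ℕ) : eword (k :: u) = ev k * eword u := by
  simp [eword]

theorem eval_consMul_eword (c : CC) (j : ℕ) (p : Comb) :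
    eval (algebraMap CC H) eword (consMul c j p) =
      (c • ev j) * eval (algebraMap CC H) eword p := by
  induction p with
  | nil => simp [consMul]
  | cons cw p ih =>
    simp only [consMul, List.map_cons, eval_cons] at ih ⊢
    rw [ih, eword_cons, map_mul, mul_add, Algebra.smul_def, mul_assoc, ← mul_assoc _ (ev j),
      Algebra.commutes cw.1, mul_assoc, mul_assoc, mul_assoc]

theorem stuffle_eword_eword {st : H →ₗ[CC] H →ₗ[CC] H} (hst : IsStuffle st) (u v : List ℕ) :
    st (eword u) (eword v) = eval (algebraMap CC H) eword (formalStuffle u v) := by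
  induction u, v using formalStuffle.induct with
  | case1 v => simp [formalStuffle, hst.1, eword]
  | case2 k u => simp [formalStuffle, hst.2.1, eword]
  | case3 k u l v ih₁ ih₂ ih₃ =>
    have hH1 : ∀ w, eword w ∈ H1 := fun w => Submodule.subset_span ⟨w, rfl⟩
    rw [eword_cons, eword_cons, hst.2.2 k l _ _ (hH1 u) (hH1 v), ← eword_cons, ← eword_cons,
      ih₁, ih₂, ih₃, formalStuffle, eval_append, eval_append, eval_flatMap, eval_consMul_eword,
      eval_consMul_eword, circ_eq_sum_circTerms, ← List.sum_map_mul_right]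
    simp only [one_smul, eval_consMul_eword]

theorem Comb.Admissible.eval_eword_mem_H0 {p : Comb} (hp : p.Admissible) :
    eval (algebraMap CC H) eword p ∈ H0 := by
  induction p with
  | nil => exact H0.zero_mem
  | cons cw p ih =>
    rw [eval_cons, ← Algebra.smul_def]
    exact H0.add_mem (H0.smul_mem _ (Submodule.subset_span ⟨cw.2, hp cw (by simp), rfl⟩))
      (ih fun cw' h => hp cw' (List.mem_cons_of_mem _ h))

theorem Comb.Admissible.map_eval_eword {q : ℂ} {ρ : CC →ₐ[ℚ] ℂ} {Z : H →+ ℂ}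
    (hZ : IsZq ρ q Z) {p : Comb} (hp : p.Admissible) :
    Z (eval (algebraMap CC H) eword p) = eval (ρ : CC →+* ℂ) (zetaq q) p := by
  induction p with
  | nil => simp
  | cons cw p ih =>
    rw [eval_cons, eval_cons, map_add, ← Algebra.smul_def, hZ.1, hZ.2 _ (hp cw (by simp)),
      ih fun cw' h => hp cw' (List.mem_cons_of_mem _ h)]
    rfl

def truncZeta {R : Type*} [CommSemiring R] (φ : ℕ → ℕ → R) : List ℕ → ℕ → R
  | [], _ => 1
  | (k::u), N => ∑ m ∈ Ico 1 N, φ k m * truncZeta φ u m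

theorem truncZeta_cons {R : Type*} [CommSemiring R] (φ : ℕ → ℕ → R) (k : ℕ) (u : List ℕ)
    (N : ℕ) : truncZeta φ (k :: u) N = ∑ m ∈ Ico 1 N, φ k m * truncZeta φ u m := rfl

theorem sum_Ico_mul_sum_Ico {R : Type*} [CommSemiring R] (f g : ℕ → R) (a N : ℕ) :
    (∑ m ∈ Ico a N, f m) * (∑ n ∈ Ico a N, g n) =
      ∑ m ∈ Ico a N, f m * ∑ n ∈ Ico a m, g n + ∑ n ∈ Ico a N, g n * ∑ m ∈ Ico a n, f m +
        ∑ m ∈ Ico a N, f m * g m := by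
  induction N with
  | zero => simp
  | succ N ih =>
    rcases lt_or_ge N a with h | h
    · simp [Ico_eq_empty_of_le (Nat.succ_le_of_lt h)]
    · simp only [sum_Ico_succ_top h]
      rw [add_mul, mul_add, mul_add, ih]
      ring

theorem List.sum_map_sum_comm {ι α M : Type*} [AddCommMonoid M] (L : List ι) (s : Finset α)
    (f : ι → α → M) : (L.map fun i => ∑ a ∈ s, f i a).sum = ∑ a ∈ s, (L.map (f · a)).sum := by
  induction L with
  | nil => simp
  | cons i L ih => simp [ih, sum_add_distrib]

section HarmonicProduct

variable {R : Type*} [CommRing R] (ρ : CC →+* R) {φ : ℕ → ℕ → R}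

theorem eval_consMul_truncZeta (c : CC) (j : ℕ) (p : Comb) (N : ℕ) :
    eval ρ (truncZeta φ · N) (consMul c j p) =
      ρ c * ∑ m ∈ Ico 1 N, φ j m * eval ρ (truncZeta φ · m) p := by
  induction p with
  | nil => simp [consMul]
  | cons cw p ih =>
    simp only [consMul, List.map_cons, eval_cons] at ih ⊢
    rw [ih, truncZeta_cons, map_mul]
    simp only [mul_sum, ← sum_add_distrib]
    exact sum_congr rfl fun m _ => by ring

theorem truncZeta_mul_truncZeta
    (hφ : ∀ k l m, 1 ≤ m →
      φ k m * φ l m = ((circTerms k l).map fun ch => ρ ch.1 * φ ch.2 m).sum)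
    (u v : List ℕ) (N : ℕ) :
    truncZeta φ u N * truncZeta φ v N = eval ρ (truncZeta φ · N) (formalStuffle u v) := by
  induction u, v using formalStuffle.induct generalizing N with
  | case1 v => simp [formalStuffle, truncZeta]
  | case2 k u => simp [formalStuffle, truncZeta]
  | case3 k u l v ih₁ ih₂ ih₃ =>
    rw [truncZeta_cons, truncZeta_cons, sum_Ico_mul_sum_Ico, formalStuffle, eval_append,
      eval_append, eval_flatMap, eval_consMul_truncZeta, eval_consMul_truncZeta]
    simp only [eval_consMul_truncZeta, map_one, one_mul]
    congr 1
    · congr 1 <;> refine sum_congr rfl fun m _ => ?_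
      · rw [← ih₁, ← truncZeta_cons]; ring
      · rw [← ih₂, ← truncZeta_cons]; ring
    · simp only [mul_sum, List.sum_map_sum_comm]
      refine sum_congr rfl fun m hm => ?_
      simp only [← mul_assoc, List.sum_map_mul_right, ← hφ k l m (mem_Ico.1 hm).1, ← ih₃]
      ring

end HarmonicProduct

section QIntegers

variable {q : ℂ} (hq : ‖q‖ < 1)
include hq

theorem one_sub_norm_le_norm_one_sub_pow {m : ℕ} (hm : 1 ≤ m) : 1 - ‖q‖ ≤ ‖1 - q ^ m‖ := by
  have hpow : ‖q‖ ^ m ≤ ‖q‖ := pow_le_of_le_one (norm_nonneg q) hq.le (by omega)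
  have := norm_sub_norm_le (1 : ℂ) (q ^ m)
  rw [norm_one, norm_pow] at this
  linarith

theorem one_sub_pow_ne_zero {m : ℕ} (hm : 1 ≤ m) : 1 - q ^ m ≠ 0 := by
  rw [← norm_pos_iff]
  linarith [one_sub_norm_le_norm_one_sub_pow hq hm]

theorem norm_qint_inv_le {m : ℕ} (hm : 1 ≤ m) : ‖qint q m‖⁻¹ ≤ ‖1 - q‖ / (1 - ‖q‖) := by
  rw [qint, norm_div, inv_div]
  exact div_le_div_of_nonneg_left (norm_nonneg _) (by linarith)
    (one_sub_norm_le_norm_one_sub_pow hq hm)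

theorem Fq_mul_Fq {ρ : CC →+* ℂ} (hρ : ρ hb = 1 - q) (k l m : ℕ) (hm : 1 ≤ m) :
    Fq q k m * Fq q l m = ((circTerms k l).map fun ch => ρ ch.1 * Fq q ch.2 m).sum := by
  have h₁ : (1 : ℂ) - q ≠ 0 := by simpa using one_sub_pow_ne_zero hq le_rfl
  have h₂ : (1 : ℂ) - q ^ m ≠ 0 := one_sub_pow_ne_zero hq hm
  rcases k with _ | k <;> rcases l with _ | l <;>
    simp only [circTerms, Fq, List.map_cons, List.map_nil, List.sum_cons, List.sum_nil,
      map_one, map_neg, hρ, one_mul, add_zero, qint, div_pow]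
  · field_simp
    ring
  · rw [show (l + 1) * m = l * m + m by ring, pow_add]
    field_simp
    ring
  · rw [show (k + 1) * m = k * m + m by ring, pow_add]
    field_simp
    ring
  · rw [show (k + l + 1) * m = k * m + l * m + m by ring,
      show (k + l) * m = k * m + l * m by ring, pow_add, pow_add]
    field_simp
    ring

theorem exists_norm_Fq_le_mul_pow {k : ℕ} (hk : k ≠ 1) :
    ∃ C, 0 ≤ C ∧ ∀ m, 1 ≤ m → ‖Fq q k m‖ ≤ C * ‖q‖ ^ m := by
  set c := ‖1 - q‖ / (1 - ‖q‖)
  have hc : 0 ≤ c := div_nonneg (norm_nonneg _) (by linarith)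
  rcases k with _ | _ | k
  · refine ⟨c, hc, fun m hm => ?_⟩
    rw [Fq, norm_div, norm_pow, div_eq_mul_inv, mul_comm]
    exact mul_le_mul_of_nonneg_right (norm_qint_inv_le hq hm) (by positivity)
  · exact absurd rfl hk
  · refine ⟨c ^ (k + 2), by positivity, fun m hm => ?_⟩
    rw [Fq, norm_div, norm_pow, norm_pow, div_eq_mul_inv, ← inv_pow, mul_comm]
    exact mul_le_mul (pow_le_pow_left₀ (by positivity) (norm_qint_inv_le hq hm) _)
      (pow_le_pow_of_le_one (norm_nonneg q) hq.le (Nat.le_mul_of_pos_left m k.succ_pos))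
      (by positivity) (by positivity)

theorem exists_norm_Fq_le (k : ℕ) : ∃ C, ∀ m, 1 ≤ m → ‖Fq q k m‖ ≤ C := by
  by_cases hk : k = 1
  · subst hk
    exact ⟨‖1 - q‖ / (1 - ‖q‖), fun m hm => by simpa [Fq] using norm_qint_inv_le hq hm⟩
  · obtain ⟨C, hC₀, hC⟩ := exists_norm_Fq_le_mul_pow hq hk
    exact ⟨C, fun m hm => (hC m hm).trans
      (mul_le_of_le_one_right hC₀ (pow_le_one₀ (norm_nonneg _) hq.le))⟩

end QIntegers

section TruncZetaBounds

variable {φ : ℕ → ℕ → ℝ} (hφ₀ : ∀ k m, 0 ≤ φ k m)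
include hφ₀

theorem truncZeta_nonneg (u : List ℕ) (N : ℕ) : 0 ≤ truncZeta φ u N := by
  induction u generalizing N with
  | nil => exact zero_le_one
  | cons k u ih => exact sum_nonneg fun m _ => mul_nonneg (hφ₀ k m) (ih m)

theorem exists_truncZeta_le_mul_pow (hφ : ∀ k, ∃ C, ∀ m, 1 ≤ m → φ k m ≤ C) (u : List ℕ) :
    ∃ D, 0 ≤ D ∧ ∀ N, truncZeta φ u N ≤ D * (N : ℝ) ^ u.length := by
  induction u with
  | nil => exact ⟨1, zero_le_one, fun N => by simp [truncZeta]⟩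
  | cons k u ih =>
    obtain ⟨D, hD₀, hD⟩ := ih
    obtain ⟨C, hC⟩ := hφ k
    have hC₀ : 0 ≤ C := (hφ₀ k 1).trans (hC 1 le_rfl)
    refine ⟨C * D, mul_nonneg hC₀ hD₀, fun N => ?_⟩
    calc truncZeta φ (k :: u) N ≤ ∑ _m ∈ Ico 1 N, C * (D * (N : ℝ) ^ u.length) := by
          refine sum_le_sum fun m hm => ?_
          obtain ⟨hm₁, hmN⟩ := mem_Ico.1 hm
          refine mul_le_mul (hC m hm₁) ((hD m).trans ?_) (truncZeta_nonneg hφ₀ u m) hC₀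
          gcongr
      _ ≤ N * (C * (D * (N : ℝ) ^ u.length)) := by
          rw [sum_const, Nat.card_Ico, nsmul_eq_mul]
          gcongr
          exact_mod_cast Nat.sub_le N 1
      _ = C * D * (N : ℝ) ^ (k :: u).length := by
          rw [List.length_cons, pow_succ]
          ring

theorem exists_truncZeta_cons_le {r : ℝ} (hr₀ : 0 ≤ r) (hr : r < 1)
    (hφ : ∀ k, ∃ C, ∀ m, 1 ≤ m → φ k m ≤ C) {k : ℕ}
    (hk : ∃ C, 0 ≤ C ∧ ∀ m, 1 ≤ m → φ k m ≤ C * r ^ m) (u : List ℕ) :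
    ∃ B, ∀ N, truncZeta φ (k :: u) N ≤ B := by
  obtain ⟨D, hD₀, hD⟩ := exists_truncZeta_le_mul_pow hφ₀ hφ u
  obtain ⟨C, hC₀, hC⟩ := hk
  have hsum : Summable fun n : ℕ => C * D * ((n : ℝ) ^ u.length * r ^ n) :=
    (summable_pow_mul_geometric_of_norm_lt_one u.length (r := r)
      (by rwa [Real.norm_of_nonneg hr₀])).mul_left (C * D)
  refine ⟨∑' n : ℕ, C * D * ((n : ℝ) ^ u.length * r ^ n), fun N => ?_⟩
  calc truncZeta φ (k :: u) N ≤ ∑ n ∈ Ico 1 N, C * D * ((n : ℝ) ^ u.length * r ^ n) := by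
        refine sum_le_sum fun n hn => ?_
        calc φ k n * truncZeta φ u n ≤ C * r ^ n * (D * (n : ℝ) ^ u.length) :=
              mul_le_mul (hC n (mem_Ico.1 hn).1) (hD n) (truncZeta_nonneg hφ₀ u n)
                (by positivity)
          _ = C * D * ((n : ℝ) ^ u.length * r ^ n) := by ring
    _ ≤ ∑' n : ℕ, C * D * ((n : ℝ) ^ u.length * r ^ n) :=
        hsum.sum_le_tsum _ fun n _ => by positivity

end TruncZetaBounds

section StrictAntiTuples

open scoped Classical in
def strictAntiTuples (r N : ℕ) : Finset (Fin r → ℕ) :=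
  {f ∈ Fintype.piFinset fun _ => range N | StrictAnti f ∧ ∀ i, 0 < f i}

variable {r N : ℕ}

theorem mem_strictAntiTuples {f : Fin r → ℕ} :
    f ∈ strictAntiTuples r N ↔ (∀ i, f i < N) ∧ StrictAnti f ∧ ∀ i, 0 < f i := by
  simp [strictAntiTuples, Fintype.mem_piFinset]

theorem strictAntiTuples_mono : Monotone (strictAntiTuples r) := fun _ _ h _ hf =>
  have hf := mem_strictAntiTuples.1 hf
  mem_strictAntiTuples.2 ⟨fun i => (hf.1 i).trans_le h, hf.2⟩

theorem mem_strictAntiTuples_sup_succ {f : Fin r → ℕ} (hf : StrictAnti f ∧ ∀ i, 0 < f i) :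
    f ∈ strictAntiTuples r (univ.sup f + 1) :=
  mem_strictAntiTuples.2 ⟨fun i => Nat.lt_succ_of_le (le_sup (mem_univ i)), hf⟩

theorem cons_mem_strictAntiTuples {m : ℕ} {t : Fin r → ℕ} :
    (Fin.cons m t : Fin (r + 1) → ℕ) ∈ strictAntiTuples (r + 1) N ↔
      m ∈ Ico 1 N ∧ t ∈ strictAntiTuples r m := by
  have hanti : StrictAnti (Fin.cons m t : Fin (r + 1) → ℕ) ↔ (∀ i, t i < m) ∧ StrictAnti t :=
    Fin.liftFun_cons (· > ·)
  simp only [mem_strictAntiTuples, hanti, Fin.forall_fin_succ, Fin.cons_zero, Fin.cons_succ,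
    mem_Ico]
  constructor
  · rintro ⟨⟨hmN, -⟩, ⟨htm, ht⟩, hm, htpos⟩
    exact ⟨⟨hm, hmN⟩, htm, ht, htpos⟩
  · rintro ⟨⟨hm, hmN⟩, htm, ht, htpos⟩
    exact ⟨⟨hmN, fun i => (htm i).trans hmN⟩, ⟨htm, ht⟩, hm, htpos⟩

theorem truncZeta_eq_sum_strictAntiTuples {R : Type*} [CommSemiring R] (φ : ℕ → ℕ → R)
    (l : List ℕ) (N : ℕ) :
    truncZeta φ l N = ∑ t ∈ strictAntiTuples l.length N, ∏ i, φ (l.get i) (t i) := by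
  induction l generalizing N with
  | nil =>
    have : strictAntiTuples 0 N = {Fin.elim0} := by
      ext f
      simp [mem_strictAntiTuples, Subsingleton.elim f Fin.elim0, Subsingleton.strictAnti]
    simp [truncZeta, this]
  | cons k u ih =>
    simp only [truncZeta_cons, ih, mul_sum, List.length_cons]
    rw [sum_sigma']
    refine sum_nbij' (fun p => Fin.cons p.1 p.2) (fun t => ⟨t 0, Fin.tail t⟩) ?_ ?_ ?_ ?_ ?_
    · rintro ⟨m, t⟩ h
      exact cons_mem_strictAntiTuples.2 (mem_sigma.1 h)
    · intro t ht
      rw [← Fin.cons_self_tail t, cons_mem_strictAntiTuples] at ht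
      exact mem_sigma.2 ht
    · rintro ⟨m, t⟩ -
      simp
    · intro t _
      simp
    · rintro ⟨m, t⟩ -
      simp [Fin.prod_univ_succ]

open scoped Classical in
theorem truncZeta_eq_sum_subtype {R : Type*} [CommSemiring R] (φ : ℕ → ℕ → R) (l : List ℕ)
    (N : ℕ) :
    truncZeta φ l N =
      ∑ t ∈ (strictAntiTuples l.length N).subtype (fun f => StrictAnti f ∧ ∀ i, 0 < f i),
        ∏ i, φ (l.get i) (t.1 i) := by
  rw [truncZeta_eq_sum_strictAntiTuples]
  exact (sum_subtype_of_mem _ fun f hf => (mem_strictAntiTuples.1 hf).2).symm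

end StrictAntiTuples

open scoped Classical in
theorem tendsto_truncZeta_tsum {𝕜 : Type*} [NormedField 𝕜] [CompleteSpace 𝕜]
    {φ : ℕ → ℕ → 𝕜} {l : List ℕ} {B : ℝ} (hB : ∀ N, truncZeta (‖φ · ·‖) l N ≤ B) :
    Tendsto (truncZeta φ l) atTop
      (𝓝 (∑' t : {f : Fin l.length → ℕ // StrictAnti f ∧ ∀ i, 0 < f i},
        ∏ i, φ (l.get i) (t.1 i))) := by
  set P : (Fin l.length → ℕ) → Prop := fun f => StrictAnti f ∧ ∀ i, 0 < f i
  set T : ℕ → Finset {f // P f} := fun N => (strictAntiTuples l.length N).subtype P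
  have hT : Tendsto T atTop atTop :=
    tendsto_atTop_finset_of_monotone (fun _ _ h => subtype_mono (strictAntiTuples_mono h))
      fun t => ⟨_, mem_subtype.2 (mem_strictAntiTuples_sup_succ t.2)⟩
  have hsummable : Summable fun t : {f // P f} => ∏ i, φ (l.get i) (t.1 i) := by
    refine Summable.of_norm (summable_of_sum_le (c := B) (fun _ => norm_nonneg _) fun s => ?_)
    obtain ⟨N, hN⟩ := (hT.eventually (eventually_ge_atTop s)).exists
    calc ∑ t ∈ s, ‖∏ i, φ (l.get i) (t.1 i)‖ ≤ ∑ t ∈ T N, ‖∏ i, φ (l.get i) (t.1 i)‖ :=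
          sum_le_sum_of_subset_of_nonneg hN fun _ _ _ => norm_nonneg _
      _ = truncZeta (‖φ · ·‖) l N := by simp only [norm_prod, truncZeta_eq_sum_subtype, T, P]
      _ ≤ B := hB N
  exact (hsummable.hasSum.comp hT).congr fun N => (truncZeta_eq_sum_subtype φ l N).symm

theorem tendsto_truncZeta_Fq_zetaq {q : ℂ} (hq : ‖q‖ < 1) {l : List ℕ}
    (hl : l.head? ≠ some 1) : Tendsto (truncZeta (Fq q) l) atTop (𝓝 (zetaq q l)) := by
  cases l with
  | nil => exact tendsto_truncZeta_tsum (B := 1) fun _ => le_rfl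
  | cons k u =>
    have hk : k ≠ 1 := by simpa using hl
    have hφ : ∀ k, ∃ C, ∀ m, 1 ≤ m → ‖Fq q k m‖ ≤ C := exists_norm_Fq_le hq
    obtain ⟨B, hB⟩ := exists_truncZeta_cons_le (fun _ _ => norm_nonneg _) (norm_nonneg q) hq hφ
      (exists_norm_Fq_le_mul_pow hq hk) u
    exact tendsto_truncZeta_tsum hB

theorem stuffle_relation_eword {q : ℂ} (hq : ‖q‖ < 1) {st : H →ₗ[CC] H →ₗ[CC] H}
    (hst : IsStuffle st) {ρ : CC →ₐ[ℚ] ℂ} (hρ : ρ hb = 1 - q) {Z : H →+ ℂ} (hZ : IsZq ρ q Z)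
    {u v : List ℕ} (hu : u.head? ≠ some 1) (hv : v.head? ≠ some 1) :
    st (eword u) (eword v) ∈ H0 ∧ Z (st (eword u) (eword v)) = Z (eword u) * Z (eword v) := by
  have hadm := formalStuffle_admissible hu hv
  rw [stuffle_eword_eword hst, hadm.map_eval_eword hZ, hZ.2 u hu, hZ.2 v hv]
  refine ⟨hadm.eval_eword_mem_H0, tendsto_nhds_unique ?_
    ((tendsto_truncZeta_Fq_zetaq hq hu).mul (tendsto_truncZeta_Fq_zetaq hq hv))⟩
  simp_rw [truncZeta_mul_truncZeta (ρ : CC →+* ℂ) (Fq_mul_Fq hq (ρ := ρ) hρ)]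
  exact tendsto_list_sum _ fun cw hcw =>
    (tendsto_truncZeta_Fq_zetaq hq (hadm cw hcw)).const_mul _

/-- For `|q| < 1` and `w, w' ∈ Ĥ⁰`,
`Z_q(w *_q w') = Z_q(w) · Z_q(w')` (and in particular `Ĥ⁰` is closed under `*_q`). -/
theorem stuffle_relation_Zq (q : ℂ) (hq : ‖q‖ < 1)
    (st : H →ₗ[CC] H →ₗ[CC] H) (hst : IsStuffle st)
    (ρ : CC →ₐ[ℚ] ℂ) (hρ : ρ hb = 1 - q)
    (Z : H →+ ℂ) (hZ : IsZq ρ q Z)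
    (w w' : H) (hw : w ∈ H0) (hw' : w' ∈ H0) :
    st w w' ∈ H0 ∧ Z (st w w') = Z w * Z w' := by
  constructor
  · have hmem := Submodule.apply_mem_map₂ st hw hw'
    rw [H0, Submodule.map₂_span_span] at hmem
    refine Submodule.span_le.2 ?_ hmem
    rintro _ ⟨_, ⟨u, hu, rfl⟩, _, ⟨v, hv, rfl⟩, rfl⟩
    exact (stuffle_relation_eword hq hst hρ hZ hu hv).1
  · induction hw, hw' using Submodule.span_induction₂ with
    | mem_mem _ _ hx hy =>
      obtain ⟨u, hu, rfl⟩ := hx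
      obtain ⟨v, hv, rfl⟩ := hy
      exact (stuffle_relation_eword hq hst hρ hZ hu hv).2
    | zero_left => simp
    | zero_right => simp
    | add_left _ _ _ _ _ _ hx hy => simp [hx, hy, add_mul]
    | add_right _ _ _ _ _ _ hy hz => simp [hy, hz, mul_add]
    | smul_left _ _ _ _ _ h => simp [hZ.1, h, mul_assoc]
    | smul_right _ _ _ _ _ h => simp [hZ.1, h, mul_left_comm]
end
end

section
/- For every q ∈ ℂ with |q| < 1, all w, w' ∈ Ĥ¹ and all t ∈ ℂ with |t| < 1, one has L_{w ⧢_q w'}(t) = L_w(t) · L_{w'}(t). -/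
noncomputable section

/-- The multiple polylogarithm of one variable `L_k(t)` for an index `k`
(a list over `N̂`): `Σ_{m_1 > ⋯ > m_r ≥ 1} t^{m_1} Π_j F_{k_j}(m_j)`; for the
empty index it equals `1`. -/
def Lval (q t : ℂ) (l : List ℕ) : ℂ :=
  ∑' m : {f : Fin l.length → ℕ // StrictAnti f ∧ ∀ i, 0 < f i},
    (if h : 0 < l.length then t ^ (m.1 ⟨0, h⟩) else 1) *
      ∏ i : Fin l.length, Fq q (l.get i) (m.1 i)

/-- The defining properties of the `𝒞`-linear map `L` evaluated at `t` (as a map on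
all of `H` extending the one on `Ĥ¹`): additive, `𝒞`-semilinear along `ρ`, and
sending each monomial `e_k` to `L_k(t)`. -/
def IsLmap (ρ : CC →ₐ[ℚ] ℂ) (q t : ℂ) (L : H →+ ℂ) : Prop :=
  (∀ c : CC, ∀ w : H, L (c • w) = ρ c * L w) ∧
  (∀ l : List ℕ, L (eword l) = Lval q t l)

/-!
Let `series w ∈ ℂ⟦X⟧` be the power series obtained by letting the letter `a` multiply the `m`-th
coefficient by `F_{1̄}(m) = (1 - q) qᵐ / (1 - qᵐ)` and the letter `b` multiply by `X / (1 - X)`.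
Since `e_k = a^{k-1} (a + ℏ) b` and `F_{1̄}(m)ᵏ + (1 - q) F_{1̄}(m)^{k-1} = F_k(m)`, the series of
`e_{k₁} ⋯ e_{k_r}` has `m`-th coefficient `F_{k₁}(m) ∑_{m > m₂ > ⋯ > m_r ≥ 1} ∏ F_{k_j}(m_j)`, so
`L_w(t)` is `series w` evaluated at `t` for `w ∈ Ĥ¹`, with absolute convergence for `|t| < 1`.
The shuffle relation thus reduces to `series (w ⧢_q w') = series w * series w'` (together with
`w ⧢_q w' ∈ Ĥ¹`), proved letter by letter: a leading `b` on either side commutes with the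
product, and two leading `a`'s are handled by
`F_{1̄}(i) F_{1̄}(j) = F_{1̄}(i + j) (F_{1̄}(i) + F_{1̄}(j) + 1 - q)`.
-/

@[elab_as_elim]
theorem FreeAlgebra.ι_mul_induction {R X : Type*} [CommSemiring R]
    {motive : FreeAlgebra R X → Prop} (one : motive 1)
    (ι_mul : ∀ i x, motive x → motive (FreeAlgebra.ι R i * x))
    (add : ∀ x y, motive x → motive y → motive (x + y))
    (smul : ∀ (r : R) x, motive x → motive (r • x)) (x : FreeAlgebra R X) : motive x := by
  suffices h : ∀ y z, motive z → motive (y * z) by simpa using h x 1 one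
  intro y
  induction y with
  | grade0 r => exact fun z hz => Algebra.smul_def r z ▸ smul r z hz
  | grade1 i => exact ι_mul i
  | mul a b ha hb => exact fun z hz => (mul_assoc a b z).symm ▸ ha _ (hb z hz)
  | add a b ha hb => exact fun z hz => (add_mul a b z).symm ▸ add _ _ (ha z hz) (hb z hz)

lemma Fin.strictAnti_cons {α : Type*} [Preorder α] {n : ℕ} {f : Fin n → α} {a : α} :
    StrictAnti (Fin.cons a f : Fin (n + 1) → α) ↔ (∀ i, f i < a) ∧ StrictAnti f :=
  Fin.liftFun_cons (· > ·)

namespace ShuffleRelation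

open PowerSeries

section QArith

variable {q : ℂ}

lemma one_sub_pow_ne_zero (hq : ‖q‖ < 1) {m : ℕ} (hm : m ≠ 0) : 1 - q ^ m ≠ 0 := by
  rw [sub_ne_zero, ne_comm]
  intro h
  have := congrArg norm h
  rw [norm_pow, norm_one, pow_eq_one_iff_of_nonneg (norm_nonneg q) hm] at this
  exact hq.ne this

lemma one_sub_ne_zero (hq : ‖q‖ < 1) : 1 - q ≠ 0 := by
  simpa using one_sub_pow_ne_zero hq one_ne_zero

lemma Fq_zero_eq (q : ℂ) (m : ℕ) : Fq q 0 m = (1 - q) / (1 - q ^ m) * q ^ m := by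
  simp only [Fq, qint]
  rw [div_div_eq_mul_div]
  ring

lemma Fq_succ_eq (q : ℂ) (k m : ℕ) :
    Fq q (k + 1) m = ((1 - q) / (1 - q ^ m)) ^ (k + 1) * (q ^ m) ^ k := by
  simp only [Fq, qint]
  rw [div_pow, div_pow, pow_mul']
  field_simp

lemma Fq_apply_zero (k : ℕ) : Fq q k 0 = 0 := by
  cases k <;> simp [Fq, qint]

/-- The `q`-analogue of `1 / (i j) = 1 / (i + j) * (1 / i + 1 / j)`. -/
lemma Fq_zero_mul_Fq_zero (hq : ‖q‖ < 1) {i j : ℕ} (hi : i ≠ 0) (hj : j ≠ 0) :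
    Fq q 0 i * Fq q 0 j = Fq q 0 (i + j) * (Fq q 0 i + Fq q 0 j + (1 - q)) := by
  have := one_sub_ne_zero hq
  have := one_sub_pow_ne_zero hq hi
  have := one_sub_pow_ne_zero hq hj
  have hij := one_sub_pow_ne_zero hq (by omega : i + j ≠ 0)
  simp only [Fq_zero_eq, pow_add] at hij ⊢
  field_simp
  ring

lemma Fq_succ_eq_add_pow (hq : ‖q‖ < 1) (k : ℕ) {m : ℕ} (hm : m ≠ 0) :
    Fq q (k + 1) m = Fq q 0 m ^ (k + 1) + (1 - q) * Fq q 0 m ^ k := by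
  have := one_sub_ne_zero hq
  have := one_sub_pow_ne_zero hq hm
  have h : Fq q 0 m + (1 - q) = (1 - q) / (1 - q ^ m) := by
    rw [Fq_zero_eq]
    field_simp
    ring
  rw [show ∀ φ c : ℂ, φ ^ (k + 1) + c * φ ^ k = φ ^ k * (φ + c) from fun _ _ => by ring, h,
    Fq_zero_eq, Fq_succ_eq, mul_pow]
  ring

lemma norm_Fq_le (hq : ‖q‖ < 1) (k m : ℕ) :
    ‖Fq q k m‖ ≤ (‖1 - q‖ / (1 - ‖q‖)) ^ max k 1 := by
  have hB : 0 ≤ ‖1 - q‖ / (1 - ‖q‖) := div_nonneg (norm_nonneg _) (by linarith)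
  rcases eq_or_ne m 0 with rfl | hm
  · rw [Fq_apply_zero, norm_zero]
    positivity
  have hr : ‖(1 - q) / (1 - q ^ m)‖ ≤ ‖1 - q‖ / (1 - ‖q‖) := by
    rw [norm_div]
    refine div_le_div_of_nonneg_left (norm_nonneg _) (by linarith) ?_
    calc 1 - ‖q‖ ≤ ‖(1 : ℂ)‖ - ‖q ^ m‖ := by
          rw [norm_pow, norm_one]
          linarith [pow_le_of_le_one (norm_nonneg q) hq.le hm]
      _ ≤ ‖1 - q ^ m‖ := norm_sub_norm_le _ _
  have hq1 (i : ℕ) : ‖(q ^ m) ^ i‖ ≤ 1 := by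
    rw [← pow_mul, norm_pow]
    exact pow_le_one₀ (norm_nonneg _) hq.le
  cases k with
  | zero =>
    rw [Fq_zero_eq, norm_mul, max_eq_right zero_le_one, pow_one]
    exact (mul_le_of_le_one_right (norm_nonneg _) (by simpa using hq1 1)).trans hr
  | succ k =>
    rw [Fq_succ_eq, norm_mul, norm_pow, max_eq_left (by omega)]
    exact (mul_le_of_le_one_right (by positivity) (hq1 k)).trans
      (pow_le_pow_left₀ (norm_nonneg _) hr _)

end QArith

section CoeffOps

variable {R : Type*} [CommRing R]

def scaleCoeffs (c : ℕ → R) : R⟦X⟧ →ₗ[R] R⟦X⟧ where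
  toFun f := mk fun m => c m * coeff m f
  map_add' f g := by ext; simp [mul_add]
  map_smul' r f := by ext; simp only [coeff_mk, map_smul, smul_eq_mul, RingHom.id_apply]; ring

@[simp] lemma coeff_scaleCoeffs (c : ℕ → R) (f : R⟦X⟧) (m : ℕ) :
    coeff m (scaleCoeffs c f) = c m * coeff m f := by
  simp [scaleCoeffs]

variable (R) in
/-- `X / (1 - X)`. -/
def geomTail : R⟦X⟧ := mk fun m => if m = 0 then 0 else 1

lemma coeff_geomTail_mul (f : R⟦X⟧) (m : ℕ) :
    coeff m (geomTail R * f) = ∑ j ∈ Finset.range m, coeff j f := by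
  rw [mul_comm, coeff_mul,
    Finset.Nat.sum_antidiagonal_eq_sum_range_succ (fun j i => coeff j f * coeff i (geomTail R)),
    Finset.sum_range_succ]
  simp only [geomTail, coeff_mk, Nat.sub_self, if_pos, mul_zero, add_zero]
  refine Finset.sum_congr rfl fun j hj => ?_
  rw [if_neg (by simp at hj; omega), mul_one]

lemma scaleCoeffs_mul_scaleCoeffs {c : ℕ → R} {κ : R}
    (hc : ∀ i j, i ≠ 0 → j ≠ 0 → c i * c j = c (i + j) * (c i + c j + κ))
    {f g : R⟦X⟧} (hf : coeff 0 f = 0) (hg : coeff 0 g = 0) :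
    scaleCoeffs c f * scaleCoeffs c g =
      scaleCoeffs c (scaleCoeffs c f * g + f * scaleCoeffs c g + κ • (f * g)) := by
  ext m
  simp only [coeff_mul, coeff_scaleCoeffs, map_add, map_smul, smul_eq_mul, Finset.mul_sum,
    ← Finset.sum_add_distrib]
  refine Finset.sum_congr rfl fun ⟨i, j⟩ hij => ?_
  rw [Finset.HasAntidiagonal.mem_antidiagonal] at hij
  subst hij
  rcases eq_or_ne i 0 with rfl | hi
  · simp [hf]
  rcases eq_or_ne j 0 with rfl | hj
  · simp [hg]
  linear_combination coeff i f * coeff j g * hc i j hi hj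

end CoeffOps

section Series

variable (q : ℂ) (ρ : CC →ₐ[ℚ] ℂ)

def letterAction : Fin 2 → Module.End ℂ ℂ⟦X⟧ :=
  ![scaleCoeffs (Fq q 0), LinearMap.mulLeft ℂ (geomTail ℂ)]

def series : H →ₛₗ[(ρ : CC →+* ℂ)] ℂ⟦X⟧ :=
  letI := Algebra.compHom (Module.End ℂ ℂ⟦X⟧) (ρ : CC →+* ℂ)
  { toFun := fun x => FreeAlgebra.lift CC (letterAction q) x 1
    map_add' := fun x y => by simp
    map_smul' := fun c x => by simp [Algebra.compHom_smul_def] }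

lemma series_one : series q ρ 1 = 1 := by
  unfold series
  let _ := Algebra.compHom (Module.End ℂ ℂ⟦X⟧) (ρ : CC →+* ℂ)
  exact congrArg (· 1) (map_one (FreeAlgebra.lift CC (letterAction q)))

lemma series_av_mul (x : H) : series q ρ (av * x) = scaleCoeffs (Fq q 0) (series q ρ x) := by
  simp [series, av, letterAction]

lemma series_bv_mul (x : H) : series q ρ (bv * x) = geomTail ℂ * series q ρ x := by
  simp [series, bv, letterAction]

variable {q ρ}

lemma coeff_series_av_pow_mul (k : ℕ) (x : H) (m : ℕ) :
    coeff m (series q ρ (av ^ k * x)) = Fq q 0 m ^ k * coeff m (series q ρ x) := by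
  induction k with
  | zero => simp
  | succ k ih =>
    rw [pow_succ', mul_assoc, series_av_mul, coeff_scaleCoeffs, ih]
    ring

lemma coeff_series_ev_mul (hq : ‖q‖ < 1) (hρ : ρ hb = 1 - q) (k : ℕ) (x : H) (m : ℕ) :
    coeff m (series q ρ (ev k * x)) =
      Fq q k m * ∑ j ∈ Finset.range m, coeff j (series q ρ x) := by
  cases k with
  | zero =>
    rw [ev, mul_assoc, series_av_mul, coeff_scaleCoeffs, series_bv_mul, coeff_geomTail_mul]
  | succ k =>
    have hsplit : ev (k + 1) * x = av ^ (k + 1) * (bv * x) + hb • (av ^ k * (bv * x)) := by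
      rw [ev, Algebra.smul_def, ← mul_assoc (algebraMap CC H hb), Algebra.commutes, pow_succ]
      noncomm_ring
    rw [hsplit, map_add, map_smulₛₗ, map_add, map_smul, coeff_series_av_pow_mul,
      coeff_series_av_pow_mul, series_bv_mul, coeff_geomTail_mul]
    rcases eq_or_ne m 0 with rfl | hm
    · simp
    simp only [Fq_succ_eq_add_pow hq k hm, RingHom.coe_coe, hρ, smul_eq_mul]
    ring

lemma coeff_zero_series_mul_bv (y : H) : coeff 0 (series q ρ (y * bv)) = 0 := by
  induction y using FreeAlgebra.ι_mul_induction with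
  | one => rw [one_mul, ← mul_one bv, series_bv_mul, coeff_geomTail_mul, Finset.sum_range_zero]
  | ι_mul i y _ =>
    rw [mul_assoc]
    fin_cases i
    · change coeff 0 (series q ρ (av * _)) = 0
      rw [series_av_mul, coeff_scaleCoeffs, Fq_apply_zero, zero_mul]
    · change coeff 0 (series q ρ (bv * _)) = 0
      rw [series_bv_mul, coeff_geomTail_mul, Finset.sum_range_zero]
  | add y z hy hz => rw [add_mul, map_add, map_add, hy, hz, add_zero]
  | smul c y hy => rw [smul_mul_assoc, map_smulₛₗ, map_smul, hy, smul_zero]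

end Series

def Hb : Submodule CC H := LinearMap.range (LinearMap.mulRight CC bv)

lemma mul_bv_mem_Hb (y : H) : y * bv ∈ Hb := ⟨y, rfl⟩

lemma mul_mem_Hb (x : H) {z : H} (hz : z ∈ Hb) : x * z ∈ Hb := by
  obtain ⟨y, rfl⟩ := hz
  exact ⟨x * y, mul_assoc x y bv⟩

section Shuffle

variable {q : ℂ} {ρ : CC →ₐ[ℚ] ℂ} {sh : H →ₗ[CC] H →ₗ[CC] H} {p : Submodule CC H}

variable (q ρ sh) in
def ShuffleCompatible (p : Submodule CC H) (x x' : H) : Prop :=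
  sh x x' ∈ p ∧ series q ρ (sh x x') = series q ρ x * series q ρ x'

lemma shuffleCompatible_zero_left (x' : H) : ShuffleCompatible q ρ sh p 0 x' := by
  simp [ShuffleCompatible]

lemma shuffleCompatible_zero_right (x : H) : ShuffleCompatible q ρ sh p x 0 := by
  simp [ShuffleCompatible]

lemma ShuffleCompatible.add_left {x y x' : H} (hx : ShuffleCompatible q ρ sh p x x')
    (hy : ShuffleCompatible q ρ sh p y x') : ShuffleCompatible q ρ sh p (x + y) x' := by
  unfold ShuffleCompatible at *
  rw [map_add, LinearMap.add_apply, map_add, map_add, add_mul, hx.2, hy.2]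
  exact ⟨add_mem hx.1 hy.1, rfl⟩

lemma ShuffleCompatible.add_right {x x' y' : H} (hx : ShuffleCompatible q ρ sh p x x')
    (hy : ShuffleCompatible q ρ sh p x y') : ShuffleCompatible q ρ sh p x (x' + y') := by
  unfold ShuffleCompatible at *
  rw [map_add, map_add, map_add, mul_add, hx.2, hy.2]
  exact ⟨add_mem hx.1 hy.1, rfl⟩

lemma ShuffleCompatible.smul_left {x x' : H} (c : CC) (h : ShuffleCompatible q ρ sh p x x') :
    ShuffleCompatible q ρ sh p (c • x) x' := by
  unfold ShuffleCompatible at *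
  rw [map_smul, LinearMap.smul_apply, map_smulₛₗ, map_smulₛₗ, smul_mul_assoc, h.2]
  exact ⟨Submodule.smul_mem _ _ h.1, rfl⟩

lemma ShuffleCompatible.smul_right {x x' : H} (c : CC) (h : ShuffleCompatible q ρ sh p x x') :
    ShuffleCompatible q ρ sh p x (c • x') := by
  unfold ShuffleCompatible at *
  rw [map_smul, map_smulₛₗ, map_smulₛₗ, mul_smul_comm, h.2]
  exact ⟨Submodule.smul_mem _ _ h.1, rfl⟩

lemma ShuffleCompatible.bv_mul_left (hsh : IsShuffle sh) {x x' : H}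
    (h : ShuffleCompatible q ρ sh Hb x x') : ShuffleCompatible q ρ sh Hb (bv * x) x' := by
  unfold ShuffleCompatible at *
  rw [hsh.2.2.2.1, series_bv_mul, series_bv_mul, h.2, mul_assoc]
  exact ⟨mul_mem_Hb _ h.1, rfl⟩

lemma ShuffleCompatible.bv_mul_right (hsh : IsShuffle sh) {x x' : H}
    (h : ShuffleCompatible q ρ sh Hb x x') : ShuffleCompatible q ρ sh Hb x (bv * x') := by
  unfold ShuffleCompatible at *
  rw [hsh.2.2.2.2, series_bv_mul, series_bv_mul, h.2, mul_left_comm]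
  exact ⟨mul_mem_Hb _ h.1, rfl⟩

lemma shuffleCompatible_bv_left (hsh : IsShuffle sh) {x' : H} (hx' : x' ∈ Hb) :
    ShuffleCompatible q ρ sh Hb bv x' := by
  have h : ShuffleCompatible q ρ sh Hb 1 x' :=
    ⟨by rwa [hsh.1], by rw [hsh.1, series_one, one_mul]⟩
  simpa only [mul_one] using h.bv_mul_left hsh

lemma shuffleCompatible_bv_right (hsh : IsShuffle sh) {x : H} (hx : x ∈ Hb) :
    ShuffleCompatible q ρ sh Hb x bv := by
  have h : ShuffleCompatible q ρ sh Hb x 1 :=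
    ⟨by rwa [hsh.2.1], by rw [hsh.2.1, series_one, mul_one]⟩
  simpa only [mul_one] using h.bv_mul_right hsh

lemma ShuffleCompatible.av_mul_av (hq : ‖q‖ < 1) (hρ : ρ hb = 1 - q) (hsh : IsShuffle sh)
    {y y' : H} (h₁ : ShuffleCompatible q ρ sh Hb (av * (y * bv)) (y' * bv))
    (h₂ : ShuffleCompatible q ρ sh Hb (y * bv) (av * (y' * bv)))
    (h₃ : ShuffleCompatible q ρ sh Hb (y * bv) (y' * bv)) :
    ShuffleCompatible q ρ sh Hb (av * (y * bv)) (av * (y' * bv)) := by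
  unfold ShuffleCompatible at *
  rw [hsh.2.2.1]
  refine ⟨mul_mem_Hb _ (add_mem (add_mem h₁.1 h₂.1) (Submodule.smul_mem _ _ h₃.1)), ?_⟩
  rw [series_av_mul, map_add (series q ρ), map_add (series q ρ), map_smulₛₗ (series q ρ), h₁.2,
    h₂.2, h₃.2]
  simp only [series_av_mul, RingHom.coe_coe, hρ]
  exact (scaleCoeffs_mul_scaleCoeffs (fun i j hi hj => Fq_zero_mul_Fq_zero hq hi hj)
    (coeff_zero_series_mul_bv y) (coeff_zero_series_mul_bv y')).symm

/-- Ending in `b` makes the constant coefficients vanish, as `av_mul_av` needs. -/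
theorem shuffleCompatible_mul_bv (hq : ‖q‖ < 1) (hρ : ρ hb = 1 - q) (hsh : IsShuffle sh)
    (y y' : H) : ShuffleCompatible q ρ sh Hb (y * bv) (y' * bv) := by
  induction y using FreeAlgebra.ι_mul_induction generalizing y' with
  | one => simpa only [one_mul] using shuffleCompatible_bv_left hsh (mul_bv_mem_Hb y')
  | ι_mul i y ih =>
    rw [mul_assoc]
    fin_cases i
    · change ShuffleCompatible q ρ sh Hb (av * (y * bv)) (y' * bv)
      induction y' using FreeAlgebra.ι_mul_induction with
      | one => simpa only [one_mul] using
          shuffleCompatible_bv_right hsh (mul_mem_Hb av (mul_bv_mem_Hb y))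
      | ι_mul j y' ih' =>
        rw [mul_assoc]
        fin_cases j
        · exact ih'.av_mul_av hq hρ hsh (mul_assoc av y' bv ▸ ih (av * y')) (ih y')
        · exact ih'.bv_mul_right hsh
      | add z z' hz hz' =>
        rw [add_mul]
        exact hz.add_right hz'
      | smul c z hz =>
        rw [smul_mul_assoc]
        exact hz.smul_right c
    · exact (ih y').bv_mul_left hsh
  | add y z hy hz =>
    rw [add_mul]
    exact (hy y').add_left (hz y')
  | smul c y hy =>
    rw [smul_mul_assoc]
    exact (hy y').smul_left c

end Shuffle

section H1

lemma eword_mem_H1 (l : List ℕ) : eword l ∈ H1 := Submodule.subset_span ⟨l, rfl⟩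

lemma mul_mem_H1 {x y : H} (hx : x ∈ H1) (hy : y ∈ H1) : x * y ∈ H1 := by
  have h : H1 * H1 ≤ H1 := by
    rw [H1, Submodule.span_mul_span, Submodule.span_le]
    rintro _ ⟨_, ⟨l, rfl⟩, _, ⟨l', rfl⟩, rfl⟩
    exact Submodule.subset_span ⟨l ++ l', by simp [eword]⟩
  exact h (Submodule.mul_mem_mul hx hy)

lemma bv_mem_H1 : bv ∈ H1 := by
  have h : bv = (LaurentPolynomial.T (-1) : CC) • (ev 1 - ev 0) := by
    rw [ev, ev, pow_zero, one_mul, add_mul, add_sub_cancel_left, ← Algebra.smul_def, smul_smul,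
      hb, ← LaurentPolynomial.T_add, neg_add_cancel, LaurentPolynomial.T_zero, one_smul]
  rw [h]
  exact Submodule.smul_mem _ _ (sub_mem (by simpa [eword] using eword_mem_H1 [1])
    (by simpa [eword] using eword_mem_H1 [0]))

lemma av_pow_mul_bv_mem_H1 (k : ℕ) : av ^ k * bv ∈ H1 := by
  induction k with
  | zero => simpa using bv_mem_H1
  | succ k ih =>
    have h : av ^ (k + 1) * bv = ev (k + 1) - hb • (av ^ k * bv) := by
      rw [ev, Algebra.smul_def, ← mul_assoc, Algebra.commutes, pow_succ]
      noncomm_ring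
    rw [h]
    exact sub_mem (by simpa [eword] using eword_mem_H1 [k + 1]) (Submodule.smul_mem _ _ ih)

/-- A word ending in `b` factors into blocks `aᵏ b`, which lie in `Ĥ¹` as `ℏ` is invertible. -/
lemma Hb_le_H1 : Hb ≤ H1 := by
  suffices h : ∀ y : H, ∀ k, av ^ k * y * bv ∈ H1 by
    rintro _ ⟨y, rfl⟩
    simpa using h y 0
  intro y
  induction y using FreeAlgebra.ι_mul_induction with
  | one => simpa using av_pow_mul_bv_mem_H1
  | ι_mul i y ih =>
    fin_cases i
    · intro k
      change av ^ k * (av * y) * bv ∈ H1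
      simpa [pow_succ, mul_assoc] using ih (k + 1)
    · intro k
      change av ^ k * (bv * y) * bv ∈ H1
      simpa [mul_assoc] using mul_mem_H1 (av_pow_mul_bv_mem_H1 k) (ih 0)
  | add y z hy hz => exact fun k => by simpa [mul_add, add_mul] using add_mem (hy k) (hz k)
  | smul c y hy => exact fun k => by simpa using Submodule.smul_mem _ c (hy k)

lemma ev_mem_Hb (k : ℕ) : ev k ∈ Hb := by
  cases k <;> exact mul_bv_mem_Hb _

lemma eword_cons_mem_Hb (k : ℕ) (l : List ℕ) : eword (k :: l) ∈ Hb := by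
  induction l generalizing k with
  | nil => simpa [eword] using ev_mem_Hb k
  | cons k' l ih => exact mul_mem_Hb (ev k) (ih k')

variable {q : ℂ} {ρ : CC →ₐ[ℚ] ℂ} {sh : H →ₗ[CC] H →ₗ[CC] H}

lemma shuffleCompatible_eword (hq : ‖q‖ < 1) (hρ : ρ hb = 1 - q) (hsh : IsShuffle sh)
    (l l' : List ℕ) : ShuffleCompatible q ρ sh H1 (eword l) (eword l') := by
  rcases l with _ | ⟨k, l⟩
  · refine ⟨?_, ?_⟩ <;> rw [show eword [] = 1 from rfl, hsh.1]
    exacts [eword_mem_H1 l', by rw [series_one, one_mul]]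
  rcases l' with _ | ⟨k', l'⟩
  · refine ⟨?_, ?_⟩ <;> rw [show eword [] = 1 from rfl, hsh.2.1]
    exacts [eword_mem_H1 _, by rw [series_one, mul_one]]
  obtain ⟨y, hy⟩ := eword_cons_mem_Hb k l
  obtain ⟨y', hy'⟩ := eword_cons_mem_Hb k' l'
  rw [← hy, ← hy']
  exact (shuffleCompatible_mul_bv hq hρ hsh y y').imp_left (Hb_le_H1 ·)

theorem shuffleCompatible_of_mem_H1 (hq : ‖q‖ < 1) (hρ : ρ hb = 1 - q) (hsh : IsShuffle sh)
    {w w' : H} (hw : w ∈ H1) (hw' : w' ∈ H1) : ShuffleCompatible q ρ sh H1 w w' := by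
  induction hw, hw' using Submodule.span_induction₂ with
  | mem_mem x x' hx hx' =>
    obtain ⟨l, rfl⟩ := hx
    obtain ⟨l', rfl⟩ := hx'
    exact shuffleCompatible_eword hq hρ hsh l l'
  | zero_left x' _ => exact shuffleCompatible_zero_left x'
  | zero_right x _ => exact shuffleCompatible_zero_right x
  | add_left x y x' _ _ _ hx hy => exact hx.add_left hy
  | add_right x x' y' _ _ _ hx hy => exact hx.add_right hy
  | smul_left c x x' _ _ h => exact h.smul_left c
  | smul_right c x x' _ _ h => exact h.smul_right c

end H1

section Eval

variable (t : ℂ)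

def evalAt (f : ℂ⟦X⟧) : ℂ := ∑' m, coeff m f * t ^ m

def AbsSummableAt (f : ℂ⟦X⟧) : Prop := Summable fun m => ‖coeff m f‖ * ‖t‖ ^ m

variable {t}

lemma AbsSummableAt.summable_norm {f : ℂ⟦X⟧} (hf : AbsSummableAt t f) :
    Summable fun m => ‖coeff m f * t ^ m‖ := by
  simp only [norm_mul, norm_pow]
  exact hf

lemma AbsSummableAt.add {f g : ℂ⟦X⟧} (hf : AbsSummableAt t f) (hg : AbsSummableAt t g) :
    AbsSummableAt t (f + g) :=
  .of_nonneg_of_le (fun _ => by positivity)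
    (fun m => by rw [map_add, ← add_mul]; gcongr; exact norm_add_le _ _)
    (Summable.add hf hg)

lemma AbsSummableAt.smul {f : ℂ⟦X⟧} (c : ℂ) (hf : AbsSummableAt t f) :
    AbsSummableAt t (c • f) := by
  simpa only [AbsSummableAt, map_smul, smul_eq_mul, norm_mul, mul_assoc] using hf.mul_left ‖c‖

lemma evalAt_add {f g : ℂ⟦X⟧} (hf : AbsSummableAt t f) (hg : AbsSummableAt t g) :
    evalAt t (f + g) = evalAt t f + evalAt t g := by
  simp only [evalAt, map_add, add_mul]
  exact hf.summable_norm.of_norm.tsum_add hg.summable_norm.of_norm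

lemma evalAt_smul (c : ℂ) (f : ℂ⟦X⟧) : evalAt t (c • f) = c * evalAt t f := by
  simp only [evalAt, map_smul, smul_eq_mul, mul_assoc, tsum_mul_left]

lemma evalAt_one : evalAt t 1 = 1 := by
  rw [evalAt, tsum_eq_single 0 fun m hm => by simp [coeff_one, hm]]
  simp

lemma evalAt_mul {f g : ℂ⟦X⟧} (hf : AbsSummableAt t f) (hg : AbsSummableAt t g) :
    evalAt t (f * g) = evalAt t f * evalAt t g := by
  rw [evalAt, evalAt, evalAt, tsum_mul_tsum_eq_tsum_sum_antidiagonal_of_summable_norm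
    hf.summable_norm hg.summable_norm]
  refine tsum_congr fun m => ?_
  rw [coeff_mul, Finset.sum_mul]
  refine Finset.sum_congr rfl fun ⟨i, j⟩ hij => ?_
  rw [← Finset.HasAntidiagonal.mem_antidiagonal.mp hij, pow_add]
  ring

end Eval

section Tuples

open scoped Classical

def StrictAntiPos {n : ℕ} (f : Fin n → ℕ) : Prop := StrictAnti f ∧ ∀ i, 0 < f i

lemma strictAntiPos_cons_iff {n j : ℕ} {g : Fin n → ℕ} :
    StrictAntiPos (Fin.cons j g : Fin (n + 1) → ℕ) ↔
      0 < j ∧ (∀ i, g i < j) ∧ StrictAntiPos g := by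
  simp only [StrictAntiPos, Fin.strictAnti_cons, Fin.forall_fin_succ, Fin.cons_zero,
    Fin.cons_succ]
  tauto

lemma strictAntiPos_cons_cons_iff {n j m : ℕ} {g : Fin n → ℕ} (hjm : j < m) :
    StrictAntiPos (Fin.cons m (Fin.cons j g : Fin (n + 1) → ℕ) : Fin (n + 2) → ℕ) ↔
      StrictAntiPos (Fin.cons j g : Fin (n + 1) → ℕ) := by
  rw [strictAntiPos_cons_iff, strictAntiPos_cons_iff, Fin.forall_fin_succ]
  simp only [Fin.cons_zero, Fin.cons_succ]
  exact ⟨fun h => h.2.2, fun h => ⟨by omega, ⟨hjm, fun i => (h.2.1 i).trans hjm⟩, h⟩⟩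

/-- `∑_{m > g₁ > ⋯ > g_r ≥ 1} ∏ᵢ F_{lᵢ}(gᵢ)`; it is `0` for `m = 0`, even when `l = []`. -/
def sumBelow (F : ℕ → ℕ → ℂ) (l : List ℕ) (m : ℕ) : ℂ :=
  ∑ g ∈ Fintype.piFinset fun _ : Fin l.length => Finset.range m,
    if StrictAntiPos (Fin.cons m g : Fin (l.length + 1) → ℕ) then ∏ i, F (l.get i) (g i) else 0

lemma sumBelow_nil (F : ℕ → ℕ → ℂ) (m : ℕ) : sumBelow F [] m = if m = 0 then 0 else 1 := by
  simp only [sumBelow, strictAntiPos_cons_iff]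
  simp [StrictAntiPos, Nat.pos_iff_ne_zero, Subsingleton.strictAnti]

lemma sumBelow_cons (F : ℕ → ℕ → ℂ) (k : ℕ) (l : List ℕ) (m : ℕ) :
    sumBelow F (k :: l) m = ∑ j ∈ Finset.range m, F k j * sumBelow F l j := by
  refine (Finset.sum_equiv (Fin.consEquiv fun _ => ℕ).symm
    (t := Finset.range m ×ˢ Fintype.piFinset fun _ : Fin l.length => Finset.range m)
    (g := fun p => if StrictAntiPos (Fin.cons m (Fin.cons p.1 p.2 : Fin (l.length + 1) → ℕ) :
      Fin (l.length + 2) → ℕ) then F k p.1 * ∏ i, F (l.get i) (p.2 i) else 0)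
    (by simp [Fin.consEquiv, Fin.tail, Fin.forall_fin_succ])
    (fun G _ => by simp [Fin.consEquiv, Fin.prod_univ_succ, Fin.tail])).trans ?_
  rw [Finset.sum_product]
  refine Finset.sum_congr rfl fun j hj => ?_
  have hjm : j < m := Finset.mem_range.mp hj
  rw [sumBelow, Finset.mul_sum]
  symm
  refine Finset.sum_subset
    (Fintype.piFinset_subset _ _ fun _ => Finset.range_subset_range.mpr hjm.le)
    (fun g _ hg => ?_) |>.trans (Finset.sum_congr rfl fun g _ => ?_)
  · rw [if_neg, mul_zero]
    exact fun h => hg (Fintype.mem_piFinset.mpr fun i =>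
      Finset.mem_range.mpr ((strictAntiPos_cons_iff.mp h).2.1 i))
  · rw [strictAntiPos_cons_cons_iff hjm, mul_ite, mul_zero]

lemma summable_ite_mem_piFinset_range (n : ℕ) {C r : ℝ} (hC : 0 ≤ C) (hr₀ : 0 ≤ r) (hr : r < 1) :
    Summable fun p : ℕ × (Fin n → ℕ) =>
      if p.2 ∈ Fintype.piFinset (fun _ => Finset.range p.1) then C * r ^ p.1 else 0 := by
  refine (summable_prod_of_nonneg fun p => by dsimp only; split_ifs <;> positivity).mpr
    ⟨fun j => summable_of_ne_finset_zero (s := Fintype.piFinset fun _ => Finset.range j)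
      fun g hg => if_neg hg, ?_⟩
  have hfiber (j : ℕ) : ∑' g : Fin n → ℕ,
      (if g ∈ Fintype.piFinset (fun _ => Finset.range j) then C * r ^ j else 0) =
        C * ((j : ℝ) ^ n * r ^ j) := by
    rw [tsum_eq_sum fun g hg => if_neg hg, Finset.sum_ite_of_true fun _ h => h,
      Finset.sum_const, Fintype.card_piFinset]
    simp only [Finset.card_range, Finset.prod_const, Finset.card_univ, Fintype.card_fin,
      nsmul_eq_mul, Nat.cast_pow]
    ring
  simp only [hfiber]
  exact (summable_pow_mul_geometric_of_norm_lt_one n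
    (by rwa [Real.norm_eq_abs, abs_of_nonneg hr₀])).mul_left C

lemma tsum_strictAntiPos_succ {n : ℕ} (φ : (Fin (n + 1) → ℕ) → ℂ) {C r : ℝ} (hr₀ : 0 ≤ r)
    (hr : r < 1) (hφ : ∀ f, ‖φ f‖ ≤ C * r ^ f 0) :
    ∑' f : {f : Fin (n + 1) → ℕ // StrictAntiPos f}, φ f =
      ∑' j, ∑ g ∈ Fintype.piFinset fun _ : Fin n => Finset.range j,
        if StrictAntiPos (Fin.cons j g : Fin (n + 1) → ℕ) then φ (Fin.cons j g) else 0 := by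
  set ψ : ℕ × (Fin n → ℕ) → ℂ := fun p => {f | StrictAntiPos f}.indicator φ (Fin.cons p.1 p.2)
  have hψ_zero (j : ℕ) (g : Fin n → ℕ) (hg : g ∉ Fintype.piFinset fun _ => Finset.range j) :
      ψ (j, g) = 0 :=
    Set.indicator_of_notMem (s := {f | StrictAntiPos f}) (fun h => hg (Fintype.mem_piFinset.mpr
      fun i => Finset.mem_range.mpr ((strictAntiPos_cons_iff.mp h).2.1 i))) φ
  have hC : 0 ≤ C := by simpa using (norm_nonneg _).trans (hφ 0)
  have hψ : Summable ψ := by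
    refine (summable_ite_mem_piFinset_range n hC hr₀ hr).of_norm_bounded fun ⟨j, g⟩ => ?_
    dsimp only
    split_ifs with hg
    · exact (norm_indicator_le_norm_self _ _).trans (by simpa using hφ (Fin.cons j g))
    · rw [hψ_zero j g hg, norm_zero]
  calc ∑' f : {f : Fin (n + 1) → ℕ // StrictAntiPos f}, φ f
      = ∑' f, {f | StrictAntiPos f}.indicator φ f := tsum_subtype {f | StrictAntiPos f} φ
    _ = ∑' p, ψ p := ((Fin.consEquiv fun _ => ℕ).tsum_eq _).symm
    _ = ∑' j, ∑' g, ψ (j, g) := hψ.tsum_prod' hψ.prod_factor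
    _ = _ := tsum_congr fun j => (tsum_eq_sum (hψ_zero j)).trans
        (Finset.sum_congr rfl fun g _ => Set.indicator_apply _ _ _)

end Tuples

section Polylog

variable {q t : ℂ} {ρ : CC →ₐ[ℚ] ℂ}

lemma sum_range_coeff_series_eword (hq : ‖q‖ < 1) (hρ : ρ hb = 1 - q) (l : List ℕ) (m : ℕ) :
    ∑ j ∈ Finset.range m, coeff j (series q ρ (eword l)) = sumBelow (Fq q) l m := by
  induction l generalizing m with
  | nil =>
    rw [sumBelow_nil, show eword [] = 1 from rfl, series_one]
    rcases m with _ | m <;> simp [coeff_one]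
  | cons k l ih =>
    rw [sumBelow_cons]
    refine Finset.sum_congr rfl fun j _ => ?_
    rw [show eword (k :: l) = ev k * eword l from rfl, coeff_series_ev_mul hq hρ, ih]

lemma coeff_series_eword_cons (hq : ‖q‖ < 1) (hρ : ρ hb = 1 - q) (k : ℕ) (l : List ℕ)
    (m : ℕ) : coeff m (series q ρ (eword (k :: l))) = Fq q k m * sumBelow (Fq q) l m := by
  rw [show eword (k :: l) = ev k * eword l from rfl, coeff_series_ev_mul hq hρ,
    sum_range_coeff_series_eword hq hρ]

lemma exists_norm_prod_Fq_le (hq : ‖q‖ < 1) (l : List ℕ) :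
    ∃ C, ∀ g : Fin l.length → ℕ, ‖∏ i, Fq q (l.get i) (g i)‖ ≤ C :=
  ⟨∏ i : Fin l.length, (‖1 - q‖ / (1 - ‖q‖)) ^ max (l.get i) 1, fun g => by
    rw [norm_prod]
    exact Finset.prod_le_prod (fun _ _ => norm_nonneg _) fun i _ => norm_Fq_le hq _ _⟩

lemma norm_sumBelow_le {F : ℕ → ℕ → ℂ} {l : List ℕ} {C : ℝ}
    (hC : ∀ g : Fin l.length → ℕ, ‖∏ i, F (l.get i) (g i)‖ ≤ C) (m : ℕ) :
    ‖sumBelow F l m‖ ≤ m ^ l.length * C := by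
  have hC₀ : 0 ≤ C := (norm_nonneg _).trans (hC 0)
  refine (norm_sum_le _ _).trans ?_
  refine (Finset.sum_le_card_nsmul _ _ C fun g _ => ?_).trans_eq ?_
  · split_ifs
    exacts [hC g, by simpa using hC₀]
  · simp [Fintype.card_piFinset]

lemma absSummableAt_series_eword (hq : ‖q‖ < 1) (ht : ‖t‖ < 1) (hρ : ρ hb = 1 - q)
    (l : List ℕ) : AbsSummableAt t (series q ρ (eword l)) := by
  rcases l with _ | ⟨k, l⟩
  · refine summable_of_ne_finset_zero (s := {0}) fun m hm => ?_
    rw [show eword [] = 1 from rfl, series_one, coeff_one, if_neg (by simpa using hm),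
      norm_zero, zero_mul]
  obtain ⟨C, hC⟩ := exists_norm_prod_Fq_le hq l
  have hB : 0 ≤ (‖1 - q‖ / (1 - ‖q‖)) ^ max k 1 := (norm_nonneg _).trans (norm_Fq_le hq k 0)
  refine Summable.of_nonneg_of_le (fun _ => by positivity) (fun m => ?_)
    ((summable_pow_mul_geometric_of_norm_lt_one l.length (r := ‖t‖)
      (by rwa [norm_norm])).mul_left ((‖1 - q‖ / (1 - ‖q‖)) ^ max k 1 * C))
  rw [coeff_series_eword_cons hq hρ, norm_mul]
  calc ‖Fq q k m‖ * ‖sumBelow (Fq q) l m‖ * ‖t‖ ^ m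
      ≤ (‖1 - q‖ / (1 - ‖q‖)) ^ max k 1 * (m ^ l.length * C) * ‖t‖ ^ m := by
        gcongr
        exacts [norm_Fq_le hq k m, norm_sumBelow_le hC m]
    _ = _ := by ring

lemma Lval_nil (q t : ℂ) : Lval q t [] = 1 := by
  let x : {f : Fin ([] : List ℕ).length → ℕ // StrictAnti f ∧ ∀ i, 0 < f i} :=
    ⟨fun i => i.elim0, fun a => a.elim0, fun i => i.elim0⟩
  rw [Lval, tsum_eq_single x fun f hf => absurd (Subtype.ext (funext fun i => i.elim0)) hf]
  simp

open scoped Classical in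
lemma Lval_cons (hq : ‖q‖ < 1) (ht : ‖t‖ < 1) (k : ℕ) (l : List ℕ) :
    Lval q t (k :: l) = ∑' m, t ^ m * (Fq q k m * sumBelow (Fq q) l m) := by
  obtain ⟨C, hC⟩ := exists_norm_prod_Fq_le hq (k :: l)
  refine (tsum_strictAntiPos_succ (n := l.length)
    (fun f => t ^ f 0 * ∏ i, Fq q ((k :: l).get i) (f i)) (norm_nonneg t) ht
    (C := C) fun f => ?_).trans (tsum_congr fun m => ?_)
  · rw [norm_mul, norm_pow, mul_comm]
    exact mul_le_mul_of_nonneg_right (hC f) (by positivity)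
  · rw [sumBelow, Finset.mul_sum, Finset.mul_sum]
    refine Finset.sum_congr rfl fun g _ => ?_
    rw [mul_ite, mul_ite, mul_zero, mul_zero]
    refine if_congr Iff.rfl ?_ rfl
    change t ^ m * ∏ i : Fin (l.length + 1),
      Fq q ((k :: l).get i) ((Fin.cons m g : Fin (l.length + 1) → ℕ) i) = _
    rw [Fin.prod_univ_succ]
    rfl

lemma evalAt_series_eword (hq : ‖q‖ < 1) (ht : ‖t‖ < 1) (hρ : ρ hb = 1 - q) (l : List ℕ) :
    evalAt t (series q ρ (eword l)) = Lval q t l := by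
  rcases l with _ | ⟨k, l⟩
  · rw [show eword [] = 1 from rfl, series_one, evalAt_one, Lval_nil]
  · rw [Lval_cons hq ht, evalAt]
    exact tsum_congr fun m => by rw [coeff_series_eword_cons hq hρ, mul_comm]

lemma L_eq_evalAt_series (hq : ‖q‖ < 1) (ht : ‖t‖ < 1) (hρ : ρ hb = 1 - q)
    {L : H →+ ℂ} (hL : IsLmap ρ q t L) {x : H} (hx : x ∈ H1) :
    L x = evalAt t (series q ρ x) ∧ AbsSummableAt t (series q ρ x) := by
  induction hx using Submodule.span_induction with
  | mem x hx =>
    obtain ⟨l, rfl⟩ := hx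
    exact ⟨(hL.2 l).trans (evalAt_series_eword hq ht hρ l).symm,
      absSummableAt_series_eword hq ht hρ l⟩
  | zero => simp [evalAt, AbsSummableAt, summable_zero]
  | add x y _ _ hx hy =>
    rw [map_add, map_add, evalAt_add hx.2 hy.2, hx.1, hy.1]
    exact ⟨rfl, hx.2.add hy.2⟩
  | smul c x _ hx =>
    rw [hL.1, map_smulₛₗ, evalAt_smul, hx.1]
    exact ⟨rfl, hx.2.smul _⟩

end Polylog

end ShuffleRelation

/-- For `|q| < 1`, `w, w' ∈ Ĥ¹` and `|t| < 1`,
`L_{w ⧢_q w'}(t) = L_w(t) · L_{w'}(t)`. -/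
theorem shuffle_relation_L (q : ℂ) (hq : ‖q‖ < 1)
    (t : ℂ) (ht : ‖t‖ < 1)
    (sh : H →ₗ[CC] H →ₗ[CC] H) (hsh : IsShuffle sh)
    (ρ : CC →ₐ[ℚ] ℂ) (hρ : ρ hb = 1 - q)
    (L : H →+ ℂ) (hL : IsLmap ρ q t L)
    (w w' : H) (hw : w ∈ H1) (hw' : w' ∈ H1) :
    L (sh w w') = L w * L w' := by
  obtain ⟨hmem, hmul⟩ := ShuffleRelation.shuffleCompatible_of_mem_H1 hq hρ hsh hw hw'
  obtain ⟨hLw, hw_abs⟩ := ShuffleRelation.L_eq_evalAt_series hq ht hρ hL hw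
  obtain ⟨hLw', hw'_abs⟩ := ShuffleRelation.L_eq_evalAt_series hq ht hρ hL hw'
  rw [(ShuffleRelation.L_eq_evalAt_series hq ht hρ hL hmem).1, hmul,
    ShuffleRelation.evalAt_mul hw_abs hw'_abs, hLw, hLw']

end
end

section
/- The 𝒞-submodule Ĥ⁰ is closed under the shuffle product: for all w, w' ∈ Ĥ⁰, the element w ⧢_q w' belongs to Ĥ⁰. -/
noncomputable section

/-!
Let `Hb` be the span of the words in `a, b` that end in `b`. Every rule defining `⧢_q` strips a
leading letter off an argument and puts a letter in front of the result, so by induction on the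
total length `Hb ⧢_q Hb ⊆ Hb`; the rule for two leading `a`'s then gives `aHb ⧢_q aHb ⊆ aHb`, and
`1` is a unit. It remains to identify `Ĥ⁰ = 𝒞·1 + aHb`. The inclusion `⊆` holds because `e_k ∈ Hb`
for all `k` and `e_k ∈ aHb` for `k ≠ 1`. Conversely a word `a^(k+1) b a^j₁ b ⋯ a^jᵣ b` is a
product of blocks `a^j b`, and `b = ℏ⁻¹ (e_1 - e_1̄)`, `a b = e_1̄`,
`a^(j+2) b = e_(j+2) - ℏ a^(j+1) b`.
-/

open Submodule

def word (u : List (Fin 2)) : H := (u.map (FreeAlgebra.ι CC)).prod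

theorem word_nil : word [] = 1 := rfl

theorem word_cons (i : Fin 2) (u : List (Fin 2)) :
    word (i :: u) = FreeAlgebra.ι CC i * word u :=
  rfl

theorem word_cons_zero (u : List (Fin 2)) : word (0 :: u) = av * word u := rfl

theorem word_cons_one (u : List (Fin 2)) : word (1 :: u) = bv * word u := rfl

theorem word_append (u v : List (Fin 2)) : word (u ++ v) = word u * word v := by
  simp [word]

theorem word_replicate_zero (k : ℕ) : word (List.replicate k 0) = av ^ k := by
  simp [word, av]

-- `Hb = H·b` and `aHb = a·H·b`.
def Hb : Submodule CC H := span CC (Set.range fun u => word u * bv)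

def aHb : Submodule CC H := Hb.map (LinearMap.mulLeft CC av)

theorem word_mul_bv_mem_Hb (u : List (Fin 2)) : word u * bv ∈ Hb :=
  subset_span ⟨u, rfl⟩

theorem ι_mul_mem_Hb (i : Fin 2) {x : H} (hx : x ∈ Hb) : FreeAlgebra.ι CC i * x ∈ Hb := by
  refine (span_le (p := Hb.comap (LinearMap.mulLeft CC _))).mpr ?_ hx
  rintro _ ⟨u, rfl⟩
  show FreeAlgebra.ι CC i * (word u * bv) ∈ Hb
  rw [← mul_assoc, ← word_cons]
  exact word_mul_bv_mem_Hb (i :: u)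

theorem av_mul_mem_Hb {x : H} (hx : x ∈ Hb) : av * x ∈ Hb := ι_mul_mem_Hb 0 hx

theorem bv_mul_mem_Hb {x : H} (hx : x ∈ Hb) : bv * x ∈ Hb := ι_mul_mem_Hb 1 hx

theorem bv_mem_Hb : bv ∈ Hb := by
  simpa [word_nil] using word_mul_bv_mem_Hb []

theorem Hb_mul_Hb_le : Hb * Hb ≤ Hb := by
  rw [Hb, span_mul_span, span_le, Set.mul_subset_iff]
  rintro _ ⟨u, rfl⟩ _ ⟨v, rfl⟩
  rw [← mul_assoc, mul_assoc (word u), bv, ← word_cons, ← word_append]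
  exact word_mul_bv_mem_Hb (u ++ 1 :: v)

theorem aHb_mul_Hb_le : aHb * Hb ≤ aHb := by
  rw [mul_le]
  rintro _ ⟨x, hx, rfl⟩ y hy
  rw [LinearMap.mulLeft_apply, mul_assoc]
  exact mem_map_of_mem (Hb_mul_Hb_le (mul_mem_mul hx hy))

theorem ev_zero : ev 0 = av * bv := rfl

theorem ev_succ (k : ℕ) : ev (k + 1) = av ^ (k + 1) * bv + hb • (av ^ k * bv) := by
  rw [ev, mul_add, add_mul, mul_assoc (av ^ k) (algebraMap CC H hb), ← Algebra.smul_def,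
    mul_smul_comm, ← pow_succ]

theorem ev_succ_succ (k : ℕ) : ev (k + 2) = av * ev (k + 1) := by
  simp only [ev, pow_succ', mul_assoc]

theorem av_pow_mul_bv_mem_Hb (k : ℕ) : av ^ k * bv ∈ Hb := by
  simpa [word_replicate_zero] using word_mul_bv_mem_Hb (List.replicate k 0)

theorem ev_mem_Hb (k : ℕ) : ev k ∈ Hb := by
  cases k with
  | zero => exact av_mul_mem_Hb bv_mem_Hb
  | succ k =>
    rw [ev_succ]
    exact add_mem (av_pow_mul_bv_mem_Hb _) (smul_mem _ _ (av_pow_mul_bv_mem_Hb _))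

theorem ev_mem_aHb {k : ℕ} (hk : k ≠ 1) : ev k ∈ aHb := by
  match k, hk with
  | 0, _ => exact mem_map_of_mem bv_mem_Hb
  | k + 2, _ => rw [ev_succ_succ]; exact mem_map_of_mem (ev_mem_Hb (k + 1))

theorem eword_mem_one_sup_Hb (l : List ℕ) : eword l ∈ 1 ⊔ Hb := by
  induction l with
  | nil => exact mem_sup_left (one_le.mp le_rfl)
  | cons k l ih =>
    have hle : Hb * (1 ⊔ Hb) ≤ Hb := by
      rw [Submodule.mul_sup, mul_one]; exact sup_le le_rfl Hb_mul_Hb_le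
    exact mem_sup_right (hle (mul_mem_mul (ev_mem_Hb k) ih))

theorem H0_le_one_sup_aHb : H0 ≤ 1 ⊔ aHb := by
  refine span_le.mpr ?_
  rintro _ ⟨l, hl, rfl⟩
  cases l with
  | nil => exact mem_sup_left (one_le.mp le_rfl)
  | cons k l =>
    have hk : k ≠ 1 := fun h => hl (by simp [h])
    have hle : aHb * (1 ⊔ Hb) ≤ aHb := by
      rw [Submodule.mul_sup, mul_one]; exact sup_le le_rfl aHb_mul_Hb_le
    exact mem_sup_right (hle (mul_mem_mul (ev_mem_aHb hk) (eword_mem_one_sup_Hb l)))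

theorem one_mem_H1 : (1 : H) ∈ H1 := subset_span ⟨[], rfl⟩

theorem one_mem_H0 : (1 : H) ∈ H0 := subset_span ⟨[], by simp, rfl⟩

theorem H0_le_H1 : H0 ≤ H1 := span_mono fun _ ⟨l, _, hl⟩ => ⟨l, hl⟩

theorem ev_mul_mem_H1 (k : ℕ) {y : H} (hy : y ∈ H1) : ev k * y ∈ H1 := by
  refine (span_le (p := H1.comap (LinearMap.mulLeft CC (ev k)))).mpr ?_ hy
  rintro _ ⟨l, rfl⟩
  exact subset_span ⟨k :: l, rfl⟩

theorem ev_mul_mem_H0 {k : ℕ} (hk : k ≠ 1) {y : H} (hy : y ∈ H1) : ev k * y ∈ H0 := by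
  refine (span_le (p := H0.comap (LinearMap.mulLeft CC (ev k)))).mpr ?_ hy
  rintro _ ⟨l, rfl⟩
  exact subset_span ⟨k :: l, by simp [hk], rfl⟩

theorem av_pow_succ_mul_bv_mul_mem_H0 (k : ℕ) {y : H} (hy : y ∈ H1) :
    av ^ (k + 1) * bv * y ∈ H0 := by
  induction k with
  | zero => rw [zero_add, pow_one, ← ev_zero]; exact ev_mul_mem_H0 zero_ne_one hy
  | succ k ih =>
    have hev : av ^ (k + 2) * bv = ev (k + 2) - hb • (av ^ (k + 1) * bv) := by
      rw [ev_succ]; abel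
    rw [hev, sub_mul, smul_mul_assoc]
    exact sub_mem (ev_mul_mem_H0 (by omega) hy) (smul_mem _ _ ih)

theorem bv_mul_mem_H1 {y : H} (hy : y ∈ H1) : bv * y ∈ H1 := by
  have hbv : bv = (LaurentPolynomial.T (-1) : CC) • (ev 1 - ev 0) := by
    rw [ev_succ, ev_zero, pow_one, pow_zero, one_mul, add_sub_cancel_left, smul_smul, hb,
      ← LaurentPolynomial.T_add, neg_add_cancel, LaurentPolynomial.T_zero, one_smul]
  rw [hbv, smul_mul_assoc, sub_mul]
  exact smul_mem _ _ (sub_mem (ev_mul_mem_H1 1 hy) (ev_mul_mem_H1 0 hy))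

theorem av_pow_mul_bv_mul_mem_H1 (k : ℕ) {y : H} (hy : y ∈ H1) : av ^ k * bv * y ∈ H1 := by
  cases k with
  | zero => rw [pow_zero, one_mul]; exact bv_mul_mem_H1 hy
  | succ k => exact H0_le_H1 (av_pow_succ_mul_bv_mul_mem_H0 k hy)

theorem av_pow_mul_word_mul_bv_mem_H1 (u : List (Fin 2)) (k : ℕ) :
    av ^ k * (word u * bv) ∈ H1 := by
  induction u generalizing k with
  | nil =>
    rw [word_nil, one_mul, ← mul_one (av ^ k * bv)]
    exact av_pow_mul_bv_mul_mem_H1 k one_mem_H1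
  | cons i u ih =>
    match i with
    | 0 => simpa only [word_cons_zero, pow_succ, mul_assoc] using ih (k + 1)
    | 1 =>
      rw [word_cons_one, mul_assoc bv, ← mul_assoc]
      exact av_pow_mul_bv_mul_mem_H1 k (by simpa using ih 0)

theorem av_pow_succ_mul_word_mul_bv_mem_H0 (u : List (Fin 2)) (k : ℕ) :
    av ^ (k + 1) * (word u * bv) ∈ H0 := by
  induction u generalizing k with
  | nil =>
    rw [word_nil, one_mul, ← mul_one (av ^ (k + 1) * bv)]
    exact av_pow_succ_mul_bv_mul_mem_H0 k one_mem_H1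
  | cons i u ih =>
    match i with
    | 0 => simpa only [word_cons_zero, pow_succ, mul_assoc] using ih (k + 1)
    | 1 =>
      rw [word_cons_one, mul_assoc bv, ← mul_assoc]
      exact av_pow_succ_mul_bv_mul_mem_H0 k (by simpa using av_pow_mul_word_mul_bv_mem_H1 u 0)

theorem aHb_le_H0 : aHb ≤ H0 := by
  rw [aHb, Hb, map_span_le]
  rintro _ ⟨u, rfl⟩
  simpa using av_pow_succ_mul_word_mul_bv_mem_H0 u 0

theorem H0_eq_one_sup_aHb : H0 = 1 ⊔ aHb :=
  le_antisymm H0_le_one_sup_aHb (sup_le (one_le.mpr one_mem_H0) aHb_le_H0)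

namespace IsShuffle

variable {sh : H →ₗ[CC] H →ₗ[CC] H}

theorem one_left (hsh : IsShuffle sh) (w : H) : sh 1 w = w := hsh.1 w

theorem one_right (hsh : IsShuffle sh) (w : H) : sh w 1 = w := hsh.2.1 w

theorem av_av (hsh : IsShuffle sh) (w w' : H) :
    sh (av * w) (av * w') = av * (sh (av * w) w' + sh w (av * w') + hb • sh w w') :=
  hsh.2.2.1 w w'

theorem bv_left (hsh : IsShuffle sh) (w w' : H) : sh (bv * w) w' = bv * sh w w' := hsh.2.2.2.1 w w'

theorem bv_right (hsh : IsShuffle sh) (w w' : H) : sh w (bv * w') = bv * sh w w' :=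
  hsh.2.2.2.2 w w'

end IsShuffle

section Shuffle

variable {sh : H →ₗ[CC] H →ₗ[CC] H}

theorem shuffle_word_mul_bv_mem_Hb (hsh : IsShuffle sh) :
    ∀ u v : List (Fin 2), sh (word u * bv) (word v * bv) ∈ Hb
  | [], v => by
    rw [word_nil, one_mul, ← mul_one bv, hsh.bv_left, hsh.one_left, mul_one]
    exact bv_mul_mem_Hb (word_mul_bv_mem_Hb v)
  | 1 :: u, v => by
    rw [word_cons_one, mul_assoc, hsh.bv_left]
    exact bv_mul_mem_Hb (shuffle_word_mul_bv_mem_Hb hsh u v)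
  | 0 :: u, [] => by
    rw [word_nil, one_mul, ← mul_one bv, hsh.bv_right, hsh.one_right, mul_one]
    exact bv_mul_mem_Hb (word_mul_bv_mem_Hb _)
  | 0 :: u, 1 :: v => by
    rw [word_cons_one v, mul_assoc bv, hsh.bv_right]
    exact bv_mul_mem_Hb (shuffle_word_mul_bv_mem_Hb hsh (0 :: u) v)
  | 0 :: u, 0 :: v => by
    rw [word_cons_zero, word_cons_zero, mul_assoc, mul_assoc, hsh.av_av, ← mul_assoc,
      ← mul_assoc, ← word_cons_zero, ← word_cons_zero]
    exact av_mul_mem_Hb (add_mem (add_mem (shuffle_word_mul_bv_mem_Hb hsh (0 :: u) v)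
      (shuffle_word_mul_bv_mem_Hb hsh u (0 :: v)))
      (smul_mem _ _ (shuffle_word_mul_bv_mem_Hb hsh u v)))
termination_by u v => u.length + v.length

theorem shuffle_mem_Hb (hsh : IsShuffle sh) {x y : H} (hx : x ∈ Hb) (hy : y ∈ Hb) :
    sh x y ∈ Hb := by
  have hle : map₂ sh Hb Hb ≤ Hb := by
    rw [Hb, map₂_span_span, span_le]
    rintro _ ⟨_, ⟨u, rfl⟩, _, ⟨v, rfl⟩, rfl⟩
    exact shuffle_word_mul_bv_mem_Hb hsh u v
  exact hle (apply_mem_map₂ sh hx hy)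

theorem shuffle_mem_aHb (hsh : IsShuffle sh) {x y : H} (hx : x ∈ aHb) (hy : y ∈ aHb) :
    sh x y ∈ aHb := by
  obtain ⟨x, hx, rfl⟩ := hx
  obtain ⟨y, hy, rfl⟩ := hy
  rw [LinearMap.mulLeft_apply, LinearMap.mulLeft_apply, hsh.av_av]
  exact mem_map_of_mem (add_mem (add_mem (shuffle_mem_Hb hsh (av_mul_mem_Hb hx) hy)
    (shuffle_mem_Hb hsh hx (av_mul_mem_Hb hy))) (smul_mem _ _ (shuffle_mem_Hb hsh hx hy)))

end Shuffle

/-- `Ĥ⁰` is closed under the shuffle product `⧢_q`. -/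
theorem H0_closed_under_shuffle
    (sh : H →ₗ[CC] H →ₗ[CC] H) (hsh : IsShuffle sh)
    (w w' : H) (hw : w ∈ H0) (hw' : w' ∈ H0) :
    sh w w' ∈ H0 := by
  rw [H0_eq_one_sup_aHb] at hw hw' ⊢
  obtain ⟨_, h1, x, hx, rfl⟩ := mem_sup.mp hw
  obtain ⟨c, rfl⟩ := mem_one.mp h1
  rw [Algebra.algebraMap_eq_smul_one, map_add, map_smul, LinearMap.add_apply,
    LinearMap.smul_apply, hsh.one_left]
  refine add_mem (smul_mem _ _ hw') (mem_sup_right ?_)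
  obtain ⟨_, h1', x', hx', rfl⟩ := mem_sup.mp hw'
  obtain ⟨c', rfl⟩ := mem_one.mp h1'
  rw [Algebra.algebraMap_eq_smul_one, map_add, map_smul, hsh.one_right]
  exact add_mem (smul_mem _ _ hx) (shuffle_mem_aHb hsh hx hx')

end
end

section
/- In the formal power series ring H[[X]] one has ψ(X) = log_{⧢_q}(1/(1 − e_{1̄}X)), where ψ(X) = (1/ℏ)·a·log(1 + ℏbX) = Σ_{n≥1} ((−1)^{n−1}/n) ℏ^{n−1} a b^n X^n and 1/(1 − e_{1̄}X) = Σ_{n≥0} e_{1̄}^n X^n. -/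
noncomputable section

/-- The `𝒞[[X]]`-bilinear extension to `H[[X]]` of a `𝒞`-bilinear product `m` on `H`. -/
def extMul (m : H →ₗ[CC] H →ₗ[CC] H) (f g : PowerSeries H) : PowerSeries H :=
  PowerSeries.mk fun N =>
    ∑ p ∈ Finset.HasAntidiagonal.antidiagonal N, m (PowerSeries.coeff (R := H) p.1 f) (PowerSeries.coeff (R := H) p.2 g)

/-- `n`-fold power with respect to the product `extMul m`, with `f^1 = f`. -/
def itpow (m : H →ₗ[CC] H →ₗ[CC] H) (f : PowerSeries H) : ℕ → PowerSeries H
  | 0 => 1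
  | 1 => f
  | (n+2) => extMul m f (itpow m f (n+1))

/-- `log_m (1 + f) = Σ_{n≥1} ((−1)^{n−1}/n) f^{m n}`, defined coefficientwise (for
`f ∈ X·H[[X]]` the sum over `n` contributing to the `N`-th coefficient is finite,
namely `1 ≤ n ≤ N`). -/
def serlog (m : H →ₗ[CC] H →ₗ[CC] H) (f : PowerSeries H) : PowerSeries H :=
  PowerSeries.mk fun N =>
    ∑ n ∈ Finset.Icc 1 N, qs ((-1 : ℚ) ^ (n - 1) / (n : ℚ)) • PowerSeries.coeff (R := H) N (itpow m f n)

/-- The geometric series `1/(1 − e_{1̄}X) = Σ_{n≥0} e_{1̄}^n X^n`. -/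
def geom : PowerSeries H := PowerSeries.mk fun n => (av * bv) ^ n

/-- The series `e_{1̄} X`. -/
def e1X : PowerSeries H := PowerSeries.mk fun n => if n = 1 then av * bv else 0

/-- `ψ(X) = (1/ℏ)·a·log(1 + ℏbX) = Σ_{n≥1} ((−1)^{n−1}/n) ℏ^{n−1} a b^n X^n`. -/
def psiS : PowerSeries H := PowerSeries.mk fun n =>
  if n = 0 then 0 else (qs ((-1 : ℚ) ^ (n - 1) / (n : ℚ)) * hb ^ (n - 1)) • (av * bv ^ n)

/-- `φ(X) = (log(1 + aX))·b = Σ_{n≥1} ((−1)^{n−1}/n) a^n b X^n`. -/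
def phiS : PowerSeries H := PowerSeries.mk fun n =>
  if n = 0 then 0 else qs ((-1 : ℚ) ^ (n - 1) / (n : ℚ)) • (av ^ n * bv)

/-- `log(1 + ℏbX) = Σ_{n≥1} ((−1)^{n−1}/n) ℏ^n b^n X^n`. -/
def lgS : PowerSeries H := PowerSeries.mk fun n =>
  if n = 0 then 0 else (qs ((-1 : ℚ) ^ (n - 1) / (n : ℚ)) * hb ^ n) • (bv ^ n)

/-!
The axioms force `⧢_q` to be commutative and associative (induction on words), so `H` with
`⧢_q` is a commutative `ℚ`-algebra, in which `log_{⧢_q}(1 + f)` is the logarithm series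
`log(1 + X)` substituted at `f`. A series `g` with `g(0) = 0` equals `log_{⧢_q}(G)` for
`G = 1/(1 − e_{1̄}X)` as soon as `G ⧢_q g' = G'`. For `g = ψ` the coefficient of `X^N` of this
equation is `∑_{i+j=N} (−ℏ)^j (ab)^i ⧢_q a b^{j+1} = (N+1)(ab)^{N+1}`, and the sum telescopes
because `(ab)^m ⧢_q a b^{k+1} = T_{k+1}(m+1) + ℏ T_{k+2}(m)`, where `T_c(m)` (`abPowReplace c m`)
is the sum of the `m` words obtained from `(ab)^m` by replacing one factor `ab` with `a b^c`.
-/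

namespace PowerSeries

variable {A : Type*} [CommRing A] [Algebra ℚ A]

theorem coeff_logOf {f : A⟦X⟧} (hf : constantCoeff f = 1) (N : ℕ) :
    coeff N (logOf f) =
      ∑ n ∈ Finset.Icc 1 N, ((-1 : ℚ) ^ (n - 1) / n) • coeff N ((f - 1) ^ n) := by
  have hf₁ : constantCoeff (f - 1) = 0 := by rw [map_sub, hf, map_one, sub_self]
  rw [logOf_eq, coeff_subst' (HasSubst.of_constantCoeff_zero' hf₁),
    finsum_eq_sum_of_support_subset _ (s := Finset.Icc 1 N) ?_]
  · refine Finset.sum_congr rfl fun n hn => ?_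
    obtain ⟨m, rfl⟩ := Nat.exists_eq_add_of_le' (Finset.mem_Icc.mp hn).1
    rw [coeff_log, if_neg m.succ_ne_zero, smul_eq_mul, ← Algebra.smul_def]
    simp [pow_succ]
  · intro n hn
    rw [Function.mem_support] at hn
    rw [Finset.coe_Icc, Set.mem_Icc]
    constructor
    · by_contra h0
      simp [show n = 0 by omega] at hn
    · by_contra hN
      refine hn ?_
      rw [X_pow_dvd_iff.mp (pow_dvd_pow_of_dvd (X_dvd_iff.mpr hf₁) n) N (by omega), smul_zero]

theorem one_add_X_mul_deriv_log : (1 + X) * d⁄dX A (log A) = 1 := by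
  ext n
  rw [deriv_log]
  rcases n with _ | n
  · simp
  · rw [add_mul, one_mul, map_add, coeff_succ_X_mul]
    simp [pow_succ]

theorem mul_derivative_logOf {f : A⟦X⟧} (hf : constantCoeff f = 1) :
    f * d⁄dX A (logOf f) = d⁄dX A f := by
  have hf₁ : constantCoeff (f - 1) = 0 := by rw [map_sub, hf, map_one, sub_self]
  have hsubst : HasSubst (f - 1) := HasSubst.of_constantCoeff_zero' hf₁
  have subst_one : (1 : A⟦X⟧).subst (f - 1) = 1 := by
    rw [← map_one (C (R := A)), subst_C, map_one, map_one]
  have subst_one_add_X : (1 + X : A⟦X⟧).subst (f - 1) = f := by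
    rw [subst_add hsubst, subst_X hsubst, subst_one, add_sub_cancel]
  rw [logOf_eq, derivative_subst hsubst, map_sub, derivative_one, sub_zero, ← mul_assoc]
  nth_rw 1 [← subst_one_add_X]
  rw [← subst_mul hsubst, one_add_X_mul_deriv_log, subst_one, one_mul]

theorem eq_logOf_of_mul_derivative {f g : A⟦X⟧} (hf : constantCoeff f = 1)
    (hg : constantCoeff g = 0) (h : f * d⁄dX A g = d⁄dX A f) : g = logOf f := by
  have : IsAddTorsionFree A := .of_module_rat A
  have hunit : IsUnit f := isUnit_iff_constantCoeff.mpr (hf ▸ isUnit_one)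
  refine derivative.ext (hunit.mul_left_cancel ?_) (hg.trans (constantCoeff_logOf hf).symm)
  rw [h, mul_derivative_logOf hf]

end PowerSeries

open PowerSeries

theorem FreeAlgebra.basisFreeMonoid_apply (R : Type*) [CommSemiring R] {X : Type*}
    (w : FreeMonoid X) : basisFreeMonoid R X w = FreeMonoid.lift (ι R) w := by
  simp [basisFreeMonoid, equivMonoidAlgebraFreeMonoid]

theorem ι_eq_av_or_bv (i : Fin 2) : FreeAlgebra.ι CC i = av ∨ FreeAlgebra.ι CC i = bv := by
  fin_cases i
  exacts [.inl rfl, .inr rfl]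

def abPowReplace (c m : ℕ) : H :=
  ∑ i ∈ Finset.range m, (av * bv) ^ i * (av * bv ^ c) * (av * bv) ^ (m - 1 - i)

theorem abPowReplace_zero (c : ℕ) : abPowReplace c 0 = 0 := Finset.sum_range_zero _

theorem abPowReplace_succ (c m : ℕ) :
    abPowReplace c (m + 1) = av * bv * abPowReplace c m + av * bv ^ c * (av * bv) ^ m := by
  rw [abPowReplace, Finset.sum_range_succ', abPowReplace, Finset.mul_sum]
  congr 1
  · refine Finset.sum_congr rfl fun i _ => ?_
    rw [show m + 1 - 1 - (i + 1) = m - 1 - i by omega, pow_succ']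
    simp only [mul_assoc]
  · simp

theorem abPowReplace_one (m : ℕ) : abPowReplace 1 m = m • (av * bv) ^ m := by
  have hterm : ∀ i ∈ Finset.range m,
      (av * bv) ^ i * (av * bv ^ 1) * (av * bv) ^ (m - 1 - i) = (av * bv) ^ m := fun i hi => by
    rw [pow_one, ← pow_succ, ← pow_add]
    congr 1
    have := Finset.mem_range.mp hi
    omega
  rw [abPowReplace, Finset.sum_congr rfl hterm, Finset.sum_const, Finset.card_range]

namespace IsShuffle

variable {sh : H →ₗ[CC] H →ₗ[CC] H}

local notation "word" => FreeMonoid.lift (FreeAlgebra.ι CC (X := Fin 2))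

theorem comm_word (hsh : IsShuffle sh) (x y : FreeMonoid (Fin 2)) :
    sh (word x) (word y) = sh (word y) (word x) := by
  obtain ⟨one_sh, sh_one, sh_a_a, sh_b_left, sh_b_right⟩ := hsh
  induction x using FreeMonoid.inductionOn' generalizing y with
  | one => rw [map_one, one_sh, sh_one]
  | of_mul i x ihx =>
    induction y using FreeMonoid.inductionOn' with
    | one => rw [map_one, one_sh, sh_one]
    | of_mul j y ihy =>
      have ihx_j := ihx (.of j * y)
      simp only [map_mul, FreeMonoid.lift_eval_of] at ihy ihx_j ⊢
      rcases ι_eq_av_or_bv i with hi | hi <;> rcases ι_eq_av_or_bv j with hj | hj <;>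
        rw [hi] at ihy ⊢ <;> rw [hj] at ihx_j ⊢
      · rw [sh_a_a, sh_a_a, ihy, ihx_j, ihx y, add_comm (sh (av * word y) (word x))]
      · rw [sh_b_right, sh_b_left, ihy]
      · rw [sh_b_left, sh_b_right, ihx_j]
      · rw [sh_b_left, sh_b_right, ihx, sh_b_left, sh_b_right]

theorem comm (hsh : IsShuffle sh) (u v : H) : sh u v = sh v u := by
  let b := FreeAlgebra.basisFreeMonoid CC (Fin 2)
  suffices sh = sh.flip from LinearMap.congr_fun₂ this u v
  refine LinearMap.ext_basis b b fun x y => ?_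
  simpa only [b, FreeAlgebra.basisFreeMonoid_apply, LinearMap.flip_apply] using hsh.comm_word x y

theorem assoc_word (hsh : IsShuffle sh) (x y z : FreeMonoid (Fin 2)) :
    sh (sh (word x) (word y)) (word z) = sh (word x) (sh (word y) (word z)) := by
  obtain ⟨one_sh, sh_one, sh_a_a, sh_b_left, sh_b_right⟩ := hsh
  induction x using FreeMonoid.inductionOn' generalizing y z with
  | one => rw [map_one, one_sh, one_sh]
  | of_mul i x ihx =>
    induction y using FreeMonoid.inductionOn' generalizing z with
    | one => rw [map_one, one_sh, sh_one]
    | of_mul j y ihy =>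
      induction z using FreeMonoid.inductionOn' with
      | one => rw [map_one, sh_one, sh_one]
      | of_mul k z ihz =>
        have ihx_jk := ihx (.of j * y) (.of k * z)
        have ihx_j := ihx (.of j * y) z
        have ihx_k := ihx y (.of k * z)
        have ihy_k := ihy (.of k * z)
        have ihy_0 := ihy z
        simp only [map_mul, FreeMonoid.lift_eval_of] at ihz ihx_jk ihx_j ihx_k ihy_k ihy_0 ⊢
        rcases ι_eq_av_or_bv i with hi | hi <;> rw [hi] at ihz ihy_k ihy_0 ⊢
        swap
        · rw [sh_b_left, sh_b_left, sh_b_left, ihx_jk]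
        rcases ι_eq_av_or_bv j with hj | hj <;> rw [hj] at ihz ihx_jk ihx_j ⊢
        swap
        · rw [sh_b_right, sh_b_left, sh_b_left, sh_b_right, ihy_k]
        rcases ι_eq_av_or_bv k with hk | hk <;> rw [hk] at ihx_jk ihx_k ihy_k ⊢
        swap
        · rw [sh_b_right, sh_b_right, sh_b_right, ihz]
        have eXY := sh_a_a (word x) (word y)
        have eYZ := sh_a_a (word y) (word z)
        rw [eXY, eYZ, sh_a_a, sh_a_a, ← eXY, ← eYZ]
        congr 1
        simp only [map_add, map_smul, LinearMap.add_apply, LinearMap.smul_apply, ihx, ihy_0, ihz,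
          ihx_jk, ihx_j, ihx_k, ihy_k]
        module

theorem assoc (hsh : IsShuffle sh) (u v w : H) : sh (sh u v) w = sh u (sh v w) := by
  let b := FreeAlgebra.basisFreeMonoid CC (Fin 2)
  have on_words (x y : FreeMonoid (Fin 2)) : sh (sh (b x) (b y)) = sh (b x) ∘ₗ sh (b y) :=
    b.ext fun z => by
      simpa only [b, FreeAlgebra.basisFreeMonoid_apply, LinearMap.comp_apply] using
        hsh.assoc_word x y z
  suffices sh.compr₂ (sh.flip w) = sh.compl₂ (sh.flip w) from LinearMap.congr_fun₂ this u v
  exact LinearMap.ext_basis b b fun x y => LinearMap.congr_fun (on_words x y) w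

theorem shuffle_bPow (hsh : IsShuffle sh) (w : H) (j : ℕ) : sh w (bv ^ j) = bv ^ j * w := by
  induction j with
  | zero => rw [pow_zero, one_mul, hsh.2.1]
  | succ j ih => rw [pow_succ', hsh.2.2.2.2, ih, mul_assoc]

theorem shuffle_abPow_a_bPow (hsh : IsShuffle sh) (m k : ℕ) :
    sh ((av * bv) ^ m) (av * bv ^ (k + 1)) =
      abPowReplace (k + 1) (m + 1) + hb • abPowReplace (k + 2) m := by
  have sh_bPow := hsh.shuffle_bPow
  obtain ⟨one_sh, -, sh_a_a, sh_b_left, -⟩ := hsh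
  induction m with
  | zero =>
    rw [pow_zero, one_sh, abPowReplace_zero, smul_zero, add_zero, abPowReplace_succ,
      abPowReplace_zero, mul_zero, zero_add, pow_zero, mul_one]
  | succ m ih =>
    have hstep : sh ((av * bv) ^ (m + 1)) (av * bv ^ (k + 1)) =
        av * bv ^ (k + 1) * (av * bv) ^ (m + 1) + av * bv * sh ((av * bv) ^ m) (av * bv ^ (k + 1))
          + hb • (av * bv ^ (k + 2) * (av * bv) ^ m) := by
      rw [pow_succ', mul_assoc, sh_a_a, sh_bPow, sh_b_left, sh_bPow]
      simp only [mul_add, mul_smul_comm, ← mul_assoc, ← pow_succ]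
    rw [hstep, ih, abPowReplace_succ (k + 1) (m + 1), abPowReplace_succ (k + 2) m]
    simp only [mul_add, mul_smul_comm, smul_add]
    abel

theorem sum_antidiagonal_shuffle_abPow (hsh : IsShuffle sh) (N : ℕ) :
    ∑ p ∈ Finset.HasAntidiagonal.antidiagonal N,
        (-hb) ^ p.2 • sh ((av * bv) ^ p.1) (av * bv ^ (p.2 + 1)) =
      (N + 1) • (av * bv) ^ (N + 1) := by
  let T (q : ℕ) : H := (-hb) ^ q • abPowReplace (q + 1) (N + 1 - q)
  have htelescope : ∀ q ∈ Finset.range (N + 1),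
      (-hb) ^ q • sh ((av * bv) ^ (N - q)) (av * bv ^ (q + 1)) = T q - T (q + 1) := by
    intro q hq
    have := Finset.mem_range.mp hq
    simp only [T]
    rw [hsh.shuffle_abPow_a_bPow, smul_add, pow_succ, mul_smul, neg_smul, smul_neg,
      sub_neg_eq_add, show N - q + 1 = N + 1 - q by omega, show N + 1 - (q + 1) = N - q by omega]
  rw [← Finset.Nat.sum_antidiagonal_swap]
  simp only [Prod.fst_swap, Prod.snd_swap]
  rw [Finset.Nat.sum_antidiagonal_eq_sum_range_succ
      (fun j i => (-hb) ^ j • sh ((av * bv) ^ i) (av * bv ^ (j + 1))),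
    Finset.sum_congr rfl htelescope, Finset.sum_range_sub']
  simp [T, abPowReplace_zero, abPowReplace_one]

end IsShuffle

def ShuffleAlgebra (_ : H →ₗ[CC] H →ₗ[CC] H) : Type := H

namespace ShuffleAlgebra

variable {sh : H →ₗ[CC] H →ₗ[CC] H}

instance : AddCommGroup (ShuffleAlgebra sh) := inferInstanceAs (AddCommGroup H)

instance : Module CC (ShuffleAlgebra sh) := inferInstanceAs (Module CC H)

instance : Module ℚ (ShuffleAlgebra sh) := Module.compHom _ (algebraMap ℚ CC)

variable [hsh : Fact (IsShuffle sh)]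

instance : CommRing (ShuffleAlgebra sh) where
  mul x y := sh x y
  one := (1 : H)
  mul_assoc := hsh.out.assoc
  one_mul := hsh.out.1
  mul_one := hsh.out.2.1
  left_distrib x := map_add (sh x)
  right_distrib := LinearMap.map_add₂ sh
  zero_mul := LinearMap.map_zero₂ sh
  mul_zero x := map_zero (sh x)
  mul_comm := hsh.out.comm

instance : Algebra ℚ (ShuffleAlgebra sh) :=
  Algebra.ofModule (fun r => LinearMap.map_smul₂ sh (algebraMap ℚ CC r))
    (fun r x => map_smul (sh x) (algebraMap ℚ CC r))

variable (sh) in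
def toShuffle : H⟦X⟧ ≃ (ShuffleAlgebra sh)⟦X⟧ := Equiv.refl _

@[simp]
theorem coeff_toShuffle (f : H⟦X⟧) (n : ℕ) : coeff n (toShuffle sh f) = (coeff n f : H) := rfl

theorem toShuffle_sub_one (f : H⟦X⟧) : toShuffle sh (f - 1) = toShuffle sh f - 1 := rfl

theorem toShuffle_extMul (f g : H⟦X⟧) :
    toShuffle sh (extMul sh f g) = toShuffle sh f * toShuffle sh g := by
  ext N
  rw [extMul, coeff_toShuffle, coeff_mk, coeff_mul]
  rfl

theorem toShuffle_itpow (f : H⟦X⟧) : ∀ n, toShuffle sh (itpow sh f n) = toShuffle sh f ^ n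
  | 0 => rfl
  | 1 => (pow_one _).symm
  | n + 2 => by rw [itpow, toShuffle_extMul, toShuffle_itpow f (n + 1), pow_succ' _ (n + 1)]

theorem toShuffle_serlog {f : H⟦X⟧} (hf : constantCoeff f = 1) :
    toShuffle sh (serlog sh (f - 1)) = logOf (toShuffle sh f) := by
  have hf' : constantCoeff (toShuffle sh f) = 1 := hf
  ext N
  rw [coeff_logOf hf', coeff_toShuffle, serlog, coeff_mk]
  refine Finset.sum_congr rfl fun n _ => ?_
  rw [← toShuffle_sub_one, ← toShuffle_itpow]
  rfl

theorem coeff_derivative_psiS (q : ℕ) :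
    coeff q (d⁄dX _ (toShuffle sh psiS)) = ((-hb) ^ q • (av * bv ^ (q + 1)) : H) := by
  rw [coeff_derivative, ← Nat.cast_succ, ← nsmul_eq_mul', coeff_toShuffle, psiS, coeff_mk,
    if_neg q.succ_ne_zero, Nat.add_sub_cancel]
  show (q + 1) • ((qs ((-1) ^ q / ((q + 1 : ℕ) : ℚ)) * hb ^ q) • (av * bv ^ (q + 1)) : H) = _
  rw [← Nat.cast_smul_eq_nsmul CC, smul_smul, ← mul_assoc, neg_pow hb]
  congr 2
  rw [qs, ← map_natCast (algebraMap ℚ CC), ← map_mul, mul_div_cancel₀ _ (by positivity), map_pow,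
    map_neg, map_one]

theorem geom_mul_derivative_psiS :
    toShuffle sh geom * d⁄dX _ (toShuffle sh psiS) = d⁄dX _ (toShuffle sh geom) := by
  ext N
  rw [coeff_mul, coeff_derivative, ← Nat.cast_succ, ← nsmul_eq_mul']
  simp only [coeff_derivative_psiS, coeff_toShuffle, geom, coeff_mk]
  refine (Finset.sum_congr rfl fun p _ => ?_).trans (hsh.out.sum_antidiagonal_shuffle_abPow N)
  exact map_smul (sh _) _ _

theorem psiS_eq_logOf_geom : toShuffle sh psiS = logOf (toShuffle sh geom) := by
  refine eq_logOf_of_mul_derivative ?_ ?_ geom_mul_derivative_psiS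
  · rw [← coeff_zero_eq_constantCoeff_apply, coeff_toShuffle, geom, coeff_mk, pow_zero]; rfl
  · rw [← coeff_zero_eq_constantCoeff_apply, coeff_toShuffle, psiS, coeff_mk, if_pos rfl]; rfl

end ShuffleAlgebra

/-- `ψ(X) = log_{⧢_q}(1/(1 − e_{1̄}X))` in `H[[X]]`. -/
theorem psi_eq_shuffle_log (sh : H →ₗ[CC] H →ₗ[CC] H) (hsh : IsShuffle sh) :
    psiS = serlog sh (geom - 1) := by
  have : Fact (IsShuffle sh) := ⟨hsh⟩
  have hgeom : constantCoeff geom = 1 := by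
    rw [← coeff_zero_eq_constantCoeff_apply, geom, coeff_mk, pow_zero]
  apply (ShuffleAlgebra.toShuffle sh).injective
  rw [ShuffleAlgebra.psiS_eq_logOf_geom, ShuffleAlgebra.toShuffle_serlog hgeom]
end
end

section
/- In the formal power series ring Ĥ¹[[X]] one has φ(X) = log_{*_q}(1/(1 − e_{1̄}X)), where φ(X) = (log(1 + aX))·b = Σ_{n≥1} ((−1)^{n−1}/n) a^n b X^n and 1/(1 − e_{1̄}X) = Σ_{n≥0} e_{1̄}^n X^n. (Note a^n b = e_{n̄} := Σ_{j=2}^n (−ℏ)^{n−j} e_j + (−ℏ)^{n−1} e_{1̄} ∈ Ĥ¹.) -/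
noncomputable section

/-!
On words in the letters `z_n = a^n b` (`n ≥ 1`) the ℏ-terms of `∘_q` cancel: since
`z_1 = e_{1̄}` and `z_{n+1} = e_{n+1} - ℏ z_n`, the stuffle recursion becomes the quasi-shuffle
recursion with `z_m ∘ z_n = z_{m+n}`. So on these words `*_q` is the product of the quasi-shuffle
algebra over the additive semigroup `ℕ+`, transported along `(n₁, …, n_r) ↦ z_{n₁} ⋯ z_{n_r}`;
`e_{1̄}^n` is the word `1ⁿ` and `a^n b` the one-letter word `n`. In that commutative ℚ-algebra
`G = Σ word(1ⁿ) Xⁿ` and `φ = Σ ((-1)^{n-1}/n) word(n) Xⁿ` satisfy `φ' G = G'` (Newton's identity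
between power sums and elementary symmetric functions), and as `G` is invertible this
differential equation forces `φ = log(1 + (G - 1))` coefficientwise.
-/

namespace PowerSeries

variable {S : Type*} [CommRing S] [Algebra ℚ S]

theorem derivative_sum_pow_mul_one_add (F : S⟦X⟧) (N : ℕ) :
    d⁄dX S (∑ n ∈ Finset.Icc 1 N, ((-1 : ℚ) ^ (n - 1) / n) • F ^ n) * (1 + F)
      = (1 - (-F) ^ N) * d⁄dX S F := by
  have hterm : ∀ n ∈ Finset.Icc 1 N,
      d⁄dX S (((-1 : ℚ) ^ (n - 1) / n) • F ^ n) = (-F) ^ (n - 1) * d⁄dX S F := by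
    intro n hn
    have hn : (n : ℚ) ≠ 0 := Nat.cast_ne_zero.mpr (by rw [Finset.mem_Icc] at hn; omega)
    rw [Derivation.map_smul_of_tower, derivative_pow, Algebra.smul_def, neg_pow F,
      ← map_natCast (algebraMap ℚ S⟦X⟧), ← mul_assoc, ← mul_assoc, ← map_mul,
      div_mul_cancel₀ _ hn, map_pow, map_neg, map_one]
  have hgeom : ∑ n ∈ Finset.Icc 1 N, (-F) ^ (n - 1) = ∑ n ∈ Finset.range N, (-F) ^ n := by
    refine Finset.sum_nbij' (· - 1) (· + 1) ?_ ?_ ?_ ?_ ?_ <;> intro i hi <;> simp at hi ⊢ <;> omega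
  rw [map_sum, Finset.sum_congr rfl hterm, ← Finset.sum_mul, hgeom, mul_right_comm,
    ← sub_neg_eq_add, ← mul_neg_geom_sum (-F) N, mul_comm (1 - -F)]

theorem coeff_eq_sum_pow_of_derivative_mul_one_add {F φ : S⟦X⟧} (hF : constantCoeff F = 0)
    (hφ : constantCoeff φ = 0) (h : d⁄dX S φ * (1 + F) = d⁄dX S F) (N : ℕ) :
    coeff N φ = ∑ n ∈ Finset.Icc 1 N, ((-1 : ℚ) ^ (n - 1) / n) • coeff N (F ^ n) := by
  set L := ∑ n ∈ Finset.Icc 1 N, ((-1 : ℚ) ^ (n - 1) / n) • F ^ n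
  have hunit : IsUnit (1 + F) := by
    rw [isUnit_iff_constantCoeff, map_add, hF, map_one, add_zero]; exact isUnit_one
  have hdvd : X ^ N ∣ d⁄dX S (φ - L) := by
    obtain ⟨G, rfl⟩ : X ∣ F := by rwa [X_dvd_iff]
    rw [← hunit.dvd_mul_right, map_sub, sub_mul, h, derivative_sum_pow_mul_one_add]
    exact ⟨(-G) ^ N * d⁄dX S (X * G), by ring⟩
  have hcoeff : coeff N (φ - L) = 0 := by
    cases N with
    | zero => simp [L, hφ]
    | succ N =>
      have hN : IsUnit ((N : S) + 1) := by
        simpa using (IsUnit.mk0 ((N : ℚ) + 1) (by positivity)).map (algebraMap ℚ S)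
      have := X_pow_dvd_iff.mp hdvd N N.lt_succ_self
      rwa [coeff_derivative, hN.mul_left_eq_zero] at this
  rw [map_sub, sub_eq_zero] at hcoeff
  simp [hcoeff, L]

end PowerSeries

open PowerSeries

/-- Hoffman's quasi-shuffle algebra: the free `R`-module on words over `A`, with the product
`quasiShuffle` below, in which letters are combined by `+`. -/
def QuasiShuffleAlgebra (R A : Type*) [CommRing R] : Type _ := List A →₀ R

namespace QuasiShuffleAlgebra

variable {R A : Type*} [CommRing R]

instance : AddCommGroup (QuasiShuffleAlgebra R A) :=
  inferInstanceAs (AddCommGroup (List A →₀ R))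

instance : Module R (QuasiShuffleAlgebra R A) := inferInstanceAs (Module R (List A →₀ R))

def word (w : List A) : QuasiShuffleAlgebra R A := Finsupp.single w 1

@[elab_as_elim]
theorem induction_on {p : QuasiShuffleAlgebra R A → Prop} (x : QuasiShuffleAlgebra R A)
    (zero : p 0) (add : ∀ x y, p x → p y → p (x + y))
    (smul_word : ∀ (c : R) w, p (c • word w)) : p x := by
  induction x using Finsupp.induction_linear with
  | zero => exact zero
  | add x y hx hy => exact add x y hx hy
  | single w c =>
    have h : (c • word w : QuasiShuffleAlgebra R A) = Finsupp.single w c :=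
      Finsupp.smul_single_one w c
    exact h ▸ smul_word c w

theorem linearMap_ext {M : Type*} [AddCommGroup M] [Module R M]
    {f g : QuasiShuffleAlgebra R A →ₗ[R] M} (h : ∀ w, f (word w) = g (word w)) : f = g :=
  Finsupp.lhom_ext' fun w => LinearMap.ext_ring (h w)

def lift {M : Type*} [AddCommGroup M] [Module R M] (f : List A → M) :
    QuasiShuffleAlgebra R A →ₗ[R] M :=
  Finsupp.linearCombination R f

@[simp]
theorem lift_word {M : Type*} [AddCommGroup M] [Module R M] (f : List A → M) (w : List A) :
    lift f (word w : QuasiShuffleAlgebra R A) = f w :=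
  (Finsupp.linearCombination_single R 1 w).trans (one_smul R (f w))

def cons (a : A) : QuasiShuffleAlgebra R A →ₗ[R] QuasiShuffleAlgebra R A :=
  lift fun w => word (a :: w)

@[simp]
theorem cons_word (a : A) (w : List A) :
    cons a (word w : QuasiShuffleAlgebra R A) = word (a :: w) :=
  lift_word _ _

section Add

variable [Add A]

def quasiShuffle : List A → List A → QuasiShuffleAlgebra R A
  | [], v => word v
  | u, [] => word u
  | a :: u, b :: v =>
      cons a (quasiShuffle u (b :: v)) + cons b (quasiShuffle (a :: u) v) +
        cons (a + b) (quasiShuffle u v)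
termination_by u v => u.length + v.length

@[simp]
theorem nil_quasiShuffle (v : List A) :
    (quasiShuffle [] v : QuasiShuffleAlgebra R A) = word v := by
  cases v <;> simp [quasiShuffle]

@[simp]
theorem quasiShuffle_nil (u : List A) :
    (quasiShuffle u [] : QuasiShuffleAlgebra R A) = word u := by
  cases u <;> simp [quasiShuffle]

theorem cons_quasiShuffle_cons (a b : A) (u v : List A) :
    (quasiShuffle (a :: u) (b :: v) : QuasiShuffleAlgebra R A) =
      cons a (quasiShuffle u (b :: v)) + cons b (quasiShuffle (a :: u) v) +
        cons (a + b) (quasiShuffle u v) := by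
  rw [quasiShuffle]

def mulₗ :
    QuasiShuffleAlgebra R A →ₗ[R] QuasiShuffleAlgebra R A →ₗ[R] QuasiShuffleAlgebra R A :=
  lift fun u => lift (quasiShuffle u)

@[simp]
theorem mulₗ_word_word (u v : List A) :
    mulₗ (word u) (word v : QuasiShuffleAlgebra R A) = quasiShuffle u v := by
  simp [mulₗ]

theorem mulₗ_cons_cons (a b : A) (x y : QuasiShuffleAlgebra R A) :
    mulₗ (cons a x) (cons b y) =
      cons a (mulₗ x (cons b y)) + cons b (mulₗ (cons a x) y) + cons (a + b) (mulₗ x y) := by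
  induction x using induction_on with
  | zero => simp
  | add x x' hx hx' => simp only [map_add, LinearMap.add_apply, hx, hx']; abel
  | smul_word c u =>
    induction y using induction_on with
    | zero => simp
    | add y y' hy hy' => simp only [map_add, hy, hy']; abel
    | smul_word d v => simp [cons_quasiShuffle_cons, smul_add]

theorem mulₗ_nil_right (x : QuasiShuffleAlgebra R A) : mulₗ x (word []) = x := by
  induction x using induction_on with
  | zero => simp
  | add x y hx hy => simp [hx, hy]
  | smul_word c u => simp

theorem mulₗ_nil_left (x : QuasiShuffleAlgebra R A) : mulₗ (word []) x = x := by
  induction x using induction_on with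
  | zero => simp
  | add x y hx hy => simp [hx, hy]
  | smul_word c u => simp

end Add

section AddCommSemigroup

variable [AddCommSemigroup A]

theorem quasiShuffle_comm : ∀ u v : List A,
    (quasiShuffle u v : QuasiShuffleAlgebra R A) = quasiShuffle v u
  | [], v => by simp
  | u, [] => by simp
  | a :: u, b :: v => by
    rw [cons_quasiShuffle_cons, cons_quasiShuffle_cons b, quasiShuffle_comm u,
      quasiShuffle_comm (a :: u), quasiShuffle_comm u v, add_comm a b]
    abel
termination_by u v => u.length + v.length

theorem mulₗ_comm (x y : QuasiShuffleAlgebra R A) : mulₗ x y = mulₗ y x := by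
  suffices h : (mulₗ : QuasiShuffleAlgebra R A →ₗ[R] _).flip = mulₗ from
    LinearMap.congr_fun₂ h y x
  exact linearMap_ext fun u => linearMap_ext fun v => by simp [quasiShuffle_comm u v]

theorem quasiShuffle_assoc : ∀ u v w : List A,
    mulₗ (quasiShuffle u v) (word w : QuasiShuffleAlgebra R A) = mulₗ (word u) (quasiShuffle v w)
  | [], v, w => by simp [mulₗ_nil_left]
  | u, [], w => by simp
  | u, v, [] => by simp [mulₗ_nil_right]
  | a :: u, b :: v, c :: w => by
    have h₁ := quasiShuffle_assoc u (b :: v) (c :: w)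
    have h₂ := quasiShuffle_assoc (a :: u) v (c :: w)
    have h₃ := quasiShuffle_assoc (a :: u) (b :: v) w
    have h₄ := quasiShuffle_assoc u v (c :: w)
    have h₅ := quasiShuffle_assoc u (b :: v) w
    have h₆ := quasiShuffle_assoc (a :: u) v w
    have h₇ := quasiShuffle_assoc u v w
    calc mulₗ (quasiShuffle (a :: u) (b :: v)) (word (c :: w))
        = cons a (mulₗ (quasiShuffle u (b :: v)) (word (c :: w)))
          + cons b (mulₗ (quasiShuffle (a :: u) v) (word (c :: w)))
          + cons c (mulₗ (quasiShuffle (a :: u) (b :: v)) (word w))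
          + cons (a + b) (mulₗ (quasiShuffle u v) (word (c :: w)))
          + cons (a + c) (mulₗ (quasiShuffle u (b :: v)) (word w))
          + cons (b + c) (mulₗ (quasiShuffle (a :: u) v) (word w))
          + cons (a + b + c) (mulₗ (quasiShuffle u v) (word w)) := by
          rw [← cons_word c w, cons_quasiShuffle_cons a b]
          simp only [map_add, LinearMap.add_apply, mulₗ_cons_cons]
          abel
      _ = cons a (mulₗ (word u) (quasiShuffle (b :: v) (c :: w)))
          + cons b (mulₗ (word (a :: u)) (quasiShuffle v (c :: w)))
          + cons c (mulₗ (word (a :: u)) (quasiShuffle (b :: v) w))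
          + cons (a + b) (mulₗ (word u) (quasiShuffle v (c :: w)))
          + cons (a + c) (mulₗ (word u) (quasiShuffle (b :: v) w))
          + cons (b + c) (mulₗ (word (a :: u)) (quasiShuffle v w))
          + cons (a + (b + c)) (mulₗ (word u) (quasiShuffle v w)) := by
          rw [h₁, h₂, h₃, h₄, h₅, h₆, h₇, add_assoc a b c]
      _ = mulₗ (word (a :: u)) (quasiShuffle (b :: v) (c :: w)) := by
          rw [← cons_word a u, cons_quasiShuffle_cons b c]
          simp only [map_add, mulₗ_cons_cons]
          abel
termination_by u v w => u.length + v.length + w.length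

theorem mulₗ_assoc (x y z : QuasiShuffleAlgebra R A) :
    mulₗ (mulₗ x y) z = mulₗ x (mulₗ y z) := by
  induction x using induction_on with
  | zero => simp
  | add x x' hx hx' => simp only [map_add, LinearMap.add_apply, hx, hx']
  | smul_word c u =>
    induction y using induction_on with
    | zero => simp
    | add y y' hy hy' => simp only [map_add, LinearMap.add_apply, hy, hy']
    | smul_word d v =>
      induction z using induction_on with
      | zero => simp
      | add z z' hz hz' => simp only [map_add, hz, hz']
      | smul_word e w => simp [quasiShuffle_assoc]

instance : CommRing (QuasiShuffleAlgebra R A) :=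
  { (inferInstance : AddCommGroup (QuasiShuffleAlgebra R A)) with
    mul := fun x y => mulₗ x y
    one := word []
    mul_assoc := mulₗ_assoc
    one_mul := mulₗ_nil_left
    mul_one := mulₗ_nil_right
    mul_comm := mulₗ_comm
    left_distrib := fun x y z => map_add (mulₗ x) y z
    right_distrib := fun x y z => LinearMap.map_add₂ mulₗ x y z
    zero_mul := fun x => LinearMap.map_zero₂ mulₗ x
    mul_zero := fun x => map_zero (mulₗ x) }

theorem one_def : (1 : QuasiShuffleAlgebra R A) = word [] := rfl

theorem word_mul_word (u v : List A) :
    (word u * word v : QuasiShuffleAlgebra R A) = quasiShuffle u v :=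
  mulₗ_word_word u v

instance : Algebra R (QuasiShuffleAlgebra R A) :=
  Algebra.ofModule (fun r x y => LinearMap.map_smul₂ mulₗ r x y)
    (fun r x y => map_smul (mulₗ x) r y)

instance [Algebra ℚ R] : Algebra ℚ (QuasiShuffleAlgebra R A) :=
  Algebra.compHom _ (algebraMap ℚ R)

instance [Algebra ℚ R] : IsScalarTower ℚ R (QuasiShuffleAlgebra R A) :=
  IsScalarTower.of_algebraMap_smul fun _ _ => rfl

end AddCommSemigroup

def ones (n : ℕ) : List ℕ+ := List.replicate n 1

theorem ones_zero : ones 0 = [] := rfl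

theorem ones_succ (n : ℕ) : ones (n + 1) = 1 :: ones n := rfl

/-- The sum of all words made of one letter `p` and `m` letters `1`. -/
def oneLetterAmongOnes (p : ℕ+) : ℕ → QuasiShuffleAlgebra R ℕ+
  | 0 => word [p]
  | m + 1 => word (p :: ones (m + 1)) + cons 1 (oneLetterAmongOnes p m)

theorem word_singleton_mul_ones (p : ℕ+) (m : ℕ) :
    (word [p] * word (ones (m + 1)) : QuasiShuffleAlgebra R ℕ+) =
      oneLetterAmongOnes p (m + 1) + oneLetterAmongOnes (p + 1) m := by
  induction m with
  | zero =>
    simp only [oneLetterAmongOnes, ones_succ, ones_zero, word_mul_word, cons_quasiShuffle_cons,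
      nil_quasiShuffle, quasiShuffle_nil, cons_word]
  | succ m ih =>
    rw [ones_succ, word_mul_word, cons_quasiShuffle_cons, nil_quasiShuffle, nil_quasiShuffle,
      ← word_mul_word, ih]
    simp only [oneLetterAmongOnes, map_add, cons_word, ones_succ]
    abel

theorem oneLetterAmongOnes_one (m : ℕ) :
    (oneLetterAmongOnes 1 m : QuasiShuffleAlgebra R ℕ+) = (m + 1) • word (ones (m + 1)) := by
  induction m with
  | zero => simp [oneLetterAmongOnes, ones]
  | succ m ih =>
    rw [oneLetterAmongOnes, ih, map_nsmul, cons_word, succ_nsmul' (word _) (m + 1)]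
    rfl

/-- Newton's identity, with power sums `word [k]` and elementary words `word (ones n)`. -/
theorem sum_neg_one_pow_mul_word_ones (M : ℕ) :
    ∑ k ∈ Finset.range (M + 1), (-1) ^ k * word [k.succPNat] * word (ones (M - k))
      = (M + 1 : QuasiShuffleAlgebra R ℕ+) * word (ones (M + 1)) := by
  have htelescope : ∀ n ≤ M,
      ∑ k ∈ Finset.range n, (-1) ^ k * word [k.succPNat] * word (ones (M - k)) =
        oneLetterAmongOnes 1 M -
          (-1) ^ n * (oneLetterAmongOnes n.succPNat (M - n) : QuasiShuffleAlgebra R ℕ+) := by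
    intro n hn
    induction n with
    | zero => simp [show Nat.succPNat 0 = 1 from rfl]
    | succ n ih =>
      obtain ⟨m, hm⟩ : ∃ m, M - n = m + 1 := ⟨M - n - 1, by omega⟩
      rw [Finset.sum_range_succ, ih (by omega), hm, mul_assoc, word_singleton_mul_ones,
        show M - (n + 1) = m by omega, show n.succPNat + 1 = (n + 1).succPNat from rfl]
      ring
  rw [Finset.sum_range_succ, htelescope M le_rfl, Nat.sub_self, oneLetterAmongOnes_one,
    nsmul_eq_mul, oneLetterAmongOnes, ones_zero, ← one_def]
  push_cast
  ring

variable [Algebra ℚ R]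

def onesSeries : (QuasiShuffleAlgebra R ℕ+)⟦X⟧ := PowerSeries.mk fun n => word (ones n)

def powerSumLog : (QuasiShuffleAlgebra R ℕ+)⟦X⟧ :=
  PowerSeries.mk fun n => if n = 0 then 0 else ((-1 : ℚ) ^ (n - 1) / n) • word [n.toPNat']

theorem coeff_derivative_powerSumLog (k : ℕ) :
    coeff k (d⁄dX _ (powerSumLog : (QuasiShuffleAlgebra R ℕ+)⟦X⟧)) =
      (-1) ^ k * word [k.succPNat] := by
  have hk : ((k : ℚ) + 1) ≠ 0 := by positivity
  rw [coeff_derivative, powerSumLog, coeff_mk, if_neg k.succ_ne_zero, Nat.add_sub_cancel,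
    Algebra.smul_def, mul_right_comm,
    show ((k : QuasiShuffleAlgebra R ℕ+) + 1) = algebraMap ℚ _ (k + 1) by simp,
    ← map_mul, Nat.cast_succ, div_mul_cancel₀ _ hk, map_pow, map_neg, map_one]
  rfl

theorem derivative_powerSumLog_mul_onesSeries :
    d⁄dX _ powerSumLog * onesSeries = d⁄dX _ (onesSeries : (QuasiShuffleAlgebra R ℕ+)⟦X⟧) := by
  ext M
  rw [coeff_mul, Finset.Nat.sum_antidiagonal_eq_sum_range_succ_mk, coeff_derivative onesSeries,
    onesSeries, coeff_mk]
  simp only [coeff_derivative_powerSumLog, coeff_mk]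
  rw [sum_neg_one_pow_mul_word_ones, mul_comm]

theorem coeff_powerSumLog (N : ℕ) :
    coeff N (powerSumLog : (QuasiShuffleAlgebra R ℕ+)⟦X⟧) =
      ∑ n ∈ Finset.Icc 1 N, ((-1 : ℚ) ^ (n - 1) / n) • coeff N ((onesSeries - 1) ^ n) := by
  refine coeff_eq_sum_pow_of_derivative_mul_one_add ?_ ?_ ?_ N
  · rw [← coeff_zero_eq_constantCoeff_apply, map_sub, onesSeries, coeff_mk, coeff_zero_one,
      ones_zero, ← one_def, sub_self]
  · rw [← coeff_zero_eq_constantCoeff_apply, powerSumLog, coeff_mk, if_pos rfl]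
  · rw [add_sub_cancel, map_sub, Derivation.map_one_eq_zero, sub_zero,
      derivative_powerSumLog_mul_onesSeries]

end QuasiShuffleAlgebra

open QuasiShuffleAlgebra

def aPowB (n : ℕ) : H := av ^ n * bv

theorem ev_zero_eq : ev 0 = aPowB 1 := by
  rw [aPowB, pow_one]; rfl

theorem ev_succ_eq (j : ℕ) : ev (j + 1) = aPowB (j + 1) + hb • aPowB j := by
  rw [ev, aPowB, aPowB, pow_succ, mul_add, add_mul, Algebra.smul_def, ← Algebra.commutes,
    mul_assoc, mul_assoc]

theorem aPowB_succ (j : ℕ) : aPowB (j + 1) = ev (j + 1) - hb • aPowB j := by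
  rw [ev_succ_eq, add_sub_cancel_right]

theorem ev_mul_mem {x : H} (k : ℕ) (hx : x ∈ H1) : ev k * x ∈ H1 := by
  induction hx using Submodule.span_induction with
  | mem y hy =>
    obtain ⟨l, rfl⟩ := hy
    exact Submodule.subset_span ⟨k :: l, by simp [eword]⟩
  | zero => rw [mul_zero]; exact zero_mem _
  | add y z _ _ hy hz => rw [mul_add]; exact add_mem hy hz
  | smul c y _ hy => rw [mul_smul_comm]; exact Submodule.smul_mem _ _ hy

theorem aPowB_mul_mem {x : H} {n : ℕ} (hn : 1 ≤ n) (hx : x ∈ H1) : aPowB n * x ∈ H1 := by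
  induction n, hn using Nat.le_induction with
  | base => rw [← ev_zero_eq]; exact ev_mul_mem 0 hx
  | succ n _ ih =>
    rw [aPowB_succ, sub_mul, smul_mul_assoc]
    exact sub_mem (ev_mul_mem _ hx) (Submodule.smul_mem _ _ ih)

/-- The recursion defining `*_q`, for letters `x`, `y` with `x ∘_q y = z`. -/
def StuffleRule (st : H →ₗ[CC] H →ₗ[CC] H) (x y z : H) : Prop :=
  ∀ w w' : H, w ∈ H1 → w' ∈ H1 →
    st (x * w) (y * w') = x * st w (y * w') + y * st (x * w) w' + z * st w w'

theorem IsStuffle.stuffleRule {st : H →ₗ[CC] H →ₗ[CC] H} (hst : IsStuffle st) (k l : ℕ) :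
    StuffleRule st (ev k) (ev l) (circ k l) :=
  hst.2.2 k l

namespace StuffleRule

variable {st : H →ₗ[CC] H →ₗ[CC] H} {x x₁ x₂ y y₁ y₂ z₁ z₂ : H}

theorem sub_smul_right (h₁ : StuffleRule st x y₁ z₁) (h₂ : StuffleRule st x y₂ z₂) (c : CC) :
    StuffleRule st x (y₁ - c • y₂) (z₁ - c • z₂) := by
  intro w w' hw hw'
  simp only [sub_mul, smul_mul_assoc, map_sub, map_smul, h₁ w w' hw hw', h₂ w w' hw hw',
    mul_sub, mul_smul_comm, smul_add]
  abel

theorem sub_smul_left (h₁ : StuffleRule st x₁ y z₁) (h₂ : StuffleRule st x₂ y z₂) (c : CC) :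
    StuffleRule st (x₁ - c • x₂) y (z₁ - c • z₂) := by
  intro w w' hw hw'
  simp only [sub_mul, smul_mul_assoc, map_sub, map_smul, h₁ w w' hw hw', h₂ w w' hw hw',
    LinearMap.sub_apply, LinearMap.smul_apply, mul_sub, mul_smul_comm, smul_add]
  abel

end StuffleRule

section Stuffle

variable {st : H →ₗ[CC] H →ₗ[CC] H}

theorem stuffleRule_ev_succ_aPowB (hst : IsStuffle st) (k : ℕ) {n : ℕ} (hn : 1 ≤ n) :
    StuffleRule st (ev (k + 1)) (aPowB n) (ev (k + n + 1)) := by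
  induction n, hn using Nat.le_induction with
  | base => rw [← ev_zero_eq]; exact hst.stuffleRule (k + 1) 0
  | succ n _ ih =>
    rw [aPowB_succ]
    convert (hst.stuffleRule (k + 1) (n + 1)).sub_smul_right ih hb using 1
    rw [circ, show k + (n + 1) + 1 = k + n + 2 by omega, add_sub_cancel_right]

theorem stuffleRule_ev_zero_aPowB (hst : IsStuffle st) {n : ℕ} (hn : 1 ≤ n) :
    StuffleRule st (ev 0) (aPowB n) (aPowB (n + 1)) := by
  induction n, hn using Nat.le_induction with
  | base =>
    rw [← ev_zero_eq]
    convert hst.stuffleRule 0 0 using 1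
    rw [circ, ev_zero_eq, ev_succ_eq, add_sub_cancel_right]
  | succ n _ ih =>
    rw [aPowB_succ n, aPowB_succ (n + 1)]
    exact (hst.stuffleRule 0 (n + 1)).sub_smul_right ih hb

theorem stuffleRule_aPowB (hst : IsStuffle st) {m n : ℕ} (hm : 1 ≤ m) (hn : 1 ≤ n) :
    StuffleRule st (aPowB m) (aPowB n) (aPowB (m + n)) := by
  induction m, hm using Nat.le_induction with
  | base => rw [← ev_zero_eq, add_comm]; exact stuffleRule_ev_zero_aPowB hst hn
  | succ m _ ih =>
    rw [aPowB_succ m, show m + 1 + n = m + n + 1 by omega, aPowB_succ (m + n)]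
    exact (stuffleRule_ev_succ_aPowB hst m hn).sub_smul_left ih hb

end Stuffle

def abWord (l : List ℕ+) : H := (List.map (fun n : ℕ+ => aPowB n) l).prod

theorem abWord_nil : abWord [] = 1 := rfl

theorem abWord_cons (n : ℕ+) (l : List ℕ+) : abWord (n :: l) = aPowB n * abWord l :=
  List.prod_cons

theorem abWord_mem (l : List ℕ+) : abWord l ∈ H1 := by
  induction l with
  | nil => exact Submodule.subset_span ⟨[], rfl⟩
  | cons n l ih => rw [abWord_cons]; exact aPowB_mul_mem n.pos ih

theorem abWord_ones (n : ℕ) : abWord (ones n) = (av * bv) ^ n := by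
  induction n with
  | zero => rfl
  | succ n ih => rw [ones_succ, abWord_cons, ih, pow_succ', aPowB, PNat.one_coe, pow_one]

def toH : QuasiShuffleAlgebra CC ℕ+ →ₗ[CC] H := lift abWord

theorem toH_word (l : List ℕ+) : toH (word l) = abWord l := lift_word _ _

theorem toH_cons (n : ℕ+) (x : QuasiShuffleAlgebra CC ℕ+) :
    toH (cons n x) = aPowB n * toH x := by
  suffices h : toH ∘ₗ cons n = LinearMap.mulLeft CC (aPowB n) ∘ₗ toH from
    LinearMap.congr_fun h x
  exact linearMap_ext fun l => by simp [toH_word, abWord_cons]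

theorem coeff_geom_sub_one (N : ℕ) : coeff N (geom - 1) = toH (coeff N (onesSeries - 1)) := by
  rw [map_sub, map_sub, map_sub, geom, onesSeries, coeff_mk, coeff_mk, toH_word, abWord_ones,
    coeff_one, coeff_one]
  split_ifs <;> simp [one_def, toH_word, abWord_nil]

theorem coeff_phiS (N : ℕ) : coeff N phiS = toH (coeff N powerSumLog) := by
  rw [phiS, powerSumLog, coeff_mk, coeff_mk]
  split_ifs with hN
  · simp
  · rw [LinearMap.map_smul_of_tower, toH_word, abWord_cons, abWord_nil, mul_one, aPowB,
      Nat.toPNat'_coe, if_pos (Nat.pos_of_ne_zero hN), qs, algebraMap_smul]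

section Transport

variable {st : H →ₗ[CC] H →ₗ[CC] H}

theorem stuffle_abWord (hst : IsStuffle st) :
    ∀ l l' : List ℕ+, st (abWord l) (abWord l') = toH (quasiShuffle l l')
  | [], l' => by rw [nil_quasiShuffle, toH_word]; exact hst.1 _
  | n :: l, [] => by rw [quasiShuffle_nil, toH_word]; exact hst.2.1 _
  | n :: l, n' :: l' => by
    rw [abWord_cons, abWord_cons,
      stuffleRule_aPowB hst n.pos n'.pos _ _ (abWord_mem l) (abWord_mem l'), ← abWord_cons,
      ← abWord_cons, stuffle_abWord hst l, stuffle_abWord hst (n :: l), stuffle_abWord hst l,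
      cons_quasiShuffle_cons, map_add, map_add, toH_cons, toH_cons, toH_cons]
    rfl
termination_by l l' => l.length + l'.length

theorem stuffle_toH (hst : IsStuffle st) (x y : QuasiShuffleAlgebra CC ℕ+) :
    st (toH x) (toH y) = toH (x * y) := by
  induction x using induction_on with
  | zero => simp
  | add x x' hx hx' => simp only [map_add, LinearMap.add_apply, add_mul, hx, hx']
  | smul_word c u =>
    induction y using induction_on with
    | zero => simp
    | add y y' hy hy' => simp only [map_add, mul_add, hy, hy']
    | smul_word d v => simp [toH_word, word_mul_word, stuffle_abWord hst]

theorem coeff_extMul (hst : IsStuffle st) {f g : H⟦X⟧} {F G : (QuasiShuffleAlgebra CC ℕ+)⟦X⟧}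
    (hf : ∀ N, coeff N f = toH (coeff N F)) (hg : ∀ N, coeff N g = toH (coeff N G)) (N : ℕ) :
    coeff N (extMul st f g) = toH (coeff N (F * G)) := by
  simp only [extMul, coeff_mk, coeff_mul, map_sum, hf, hg, stuffle_toH hst]

theorem coeff_itpow (hst : IsStuffle st) (n N : ℕ) :
    coeff N (itpow st (geom - 1) (n + 1)) = toH (coeff N ((onesSeries - 1) ^ (n + 1))) := by
  induction n generalizing N with
  | zero => simpa only [itpow, zero_add, pow_one] using coeff_geom_sub_one N
  | succ n ih => rw [itpow, pow_succ', coeff_extMul hst coeff_geom_sub_one ih]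

end Transport

/-- `φ(X) = log_{*_q}(1/(1 − e_{1̄}X))` in `Ĥ¹[[X]]`. -/
theorem phi_eq_stuffle_log (st : H →ₗ[CC] H →ₗ[CC] H) (hst : IsStuffle st) :
    phiS = serlog st (geom - 1) := by
  ext N
  rw [coeff_phiS, coeff_powerSumLog, map_sum, serlog, coeff_mk]
  refine Finset.sum_congr rfl fun n hn => ?_
  obtain ⟨m, rfl⟩ : ∃ m, n = m + 1 := ⟨n - 1, by rw [Finset.mem_Icc] at hn; omega⟩
  rw [coeff_itpow hst]
  exact map_smul toH _ _

end
end
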